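/- arXiv:2111.03526 — 9 statements merged into one kernel-verified Lean document; each statement's English description precedes it below -/
import Mathlib

section
/- Let m > r be positive integers, A ∈ ℤ^{r×m}, and b ∈ ℤ^r such that S(A,b) ≠ ∅. Then for every n ∈ ℕ, |S_0(A,b) ∩ [n]^m| ≤ |S(A,b) ∩ [n]^m| ≤ n^{m − rk(A)}. Moreover, if A is positive, then there exist a constant c > 0 and n_0 such that for all n ≥ n_0, |S_0(A,b) ∩ [n]^m| ≥ c · n^{m − rk(A)}. -/
open Matrix Finset MeasureTheory ProbabilityTheory Filter Topology
open scoped BoundedContinuousFunction NNReal ENNReal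

attribute [local instance] Classical.propDecidable

noncomputable section

/-- The rank over `ℚ` of an integer matrix. -/
def rkZ {α β : Type*} [Fintype α] [Fintype β] (A : Matrix α β ℤ) : ℕ :=
  (A.map (Int.cast : ℤ → ℚ)).rank

/-- The submatrix consisting of the columns indexed by `Q`. -/
def colSub {α β : Type*} (A : Matrix α β ℤ) (Q : Finset β) : Matrix α Q ℤ :=
  A.submatrix id (fun j => (j : β))

/-- A matrix is positive if `Ax = 0` has a solution with all entries positive and,
for every pair of distinct indices, a solution whose corresponding entries differ. -/
def IsPositiveMat {α β : Type*} [Fintype β] (A : Matrix α β ℤ) : Prop :=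
  (∃ x : β → ℤ, A.mulVec x = 0 ∧ ∀ j, 0 < x j) ∧
    ∀ i j : β, i ≠ j → ∃ x : β → ℤ, A.mulVec x = 0 ∧ x i ≠ x j

/-- A matrix is abundant if it has positive rank and removing at most two columns
does not change the rank. -/
def IsAbundantMat {α β : Type*} [Fintype α] [Fintype β] (A : Matrix α β ℤ) : Prop :=
  0 < rkZ A ∧ ∀ Q : Finset β, Fintype.card β - 2 ≤ Q.card → rkZ (colSub A Q) = rkZ A

/-- `r_Q(A) = rk(A) - rk(A^{complement of Q})`. -/
def rQ {α β : Type*} [Fintype α] [Fintype β] (A : Matrix α β ℤ) (Q : Finset β) : ℕ :=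
  rkZ A - rkZ (colSub A Qᶜ)

/-- The density `c(A) = max over nonempty Q of |Q|/(|Q| - r_Q(A))`. -/
def matDensity {α β : Type*} [Fintype α] [Fintype β] (A : Matrix α β ℤ) : ℝ :=
  sSup {x : ℝ | ∃ Q : Finset β, Q.Nonempty ∧
    x = (Q.card : ℝ) / ((Q.card : ℝ) - (rQ A Q : ℝ))}

/-- The matrix `A_𝔭` obtained by summing columns over the classes of a partition
(realised as a setoid); columns are indexed by the classes. -/
def contract {α β : Type*} [Fintype β] (A : Matrix α β ℤ) (s : Setoid β) :
    Matrix α (Quotient s) ℤ :=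
  fun i c => ∑ j ∈ Finset.univ.filter (fun j => Quotient.mk s j = c), A i j

/-- `𝔓(A)`: partitions whose contracted matrix has full rank `rk(A)`. -/
def partitionFamily {α β : Type*} [Fintype α] [Fintype β] (A : Matrix α β ℤ) :
    Set (Setoid β) :=
  {s | rkZ (contract A s) = rkZ A}

/-- The partition of `β` into singletons, as a setoid. -/
def singletonSetoid (β : Type*) : Setoid β := ⟨Eq, eq_equivalence⟩

/-- Proper solutions: solutions with pairwise distinct coordinates. -/
def properSols {α β : Type*} [Fintype β] (A : Matrix α β ℤ) (b : α → ℤ) : Set (β → ℤ) :=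
  {x | A.mulVec x = b ∧ Function.Injective x}

/-- Type-`𝔓` solutions: solutions whose induced partition (the kernel setoid) lies in `𝔓`. -/
def typeSols {α β : Type*} [Fintype β] (A : Matrix α β ℤ) (b : α → ℤ)
    (P : Set (Setoid β)) : Set (β → ℤ) :=
  {x | A.mulVec x = b ∧ Setoid.ker x ∈ P}

/-- The Bernoulli measure on `Bool` with parameter `p`. -/
def bern (p : ℝ≥0) (h : p ≤ 1) : Measure Bool :=
  (PMF.bernoulli p (by exact_mod_cast h)).toMeasure

/-- The product Bernoulli measure on `Fin n → Bool`, modelling the random set `[n]_p`. -/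
def prodBern (n : ℕ) (p : ℝ≥0) (h : p ≤ 1) : Measure (Fin n → Bool) :=
  Measure.pi fun _ => bern p h

/-- An integer `a` is a selected element of `[n]_p` in outcome `ω`. -/
def selected {n : ℕ} (ω : Fin n → Bool) (a : ℤ) : Prop :=
  ∃ i : Fin n, a = (i : ℕ) + 1 ∧ ω i = true

/-- The number of solutions in `S` whose entries all lie in the random set `[n]_p`. -/
def solCount {β : Type*} (S : Set (β → ℤ)) (n : ℕ) (ω : Fin n → Bool) : ℕ :=
  Nat.card {x : β → ℤ // x ∈ S ∧ ∀ j, selected ω (x j)}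

end


/-!
The solutions of `A x = b` form a translate of the lattice `ker A ∩ ℤ^m`, of rank
`d = m - rk A`. For the upper bound, the `d` coordinates off a column basis of `A` determine a
solution. For the lower bound, take a solution `x₀`, a positive kernel vector `v` and integer
kernel vectors `u₁, …, u_d` independent over `ℚ`: for `T ≍ s` the points
`x₀ + T v + ∑ tᵢ uᵢ`, `t ∈ {0, …, s - 1}^d`, are `s^d` distinct solutions in `[C s]^m`.
Positivity of `A` makes the `uᵢ` separate every pair of coordinates, so each coincidence
`x_j = x_k` cuts out a hyperplane in `t` containing at most `s^(d-1)` of these points; for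
`s ≥ 2 m²` at least half of the points are proper solutions.
-/

namespace Matrix

variable {K ι κ : Type*} [Field K] [Fintype ι]

theorem mulVec_eq_sum_smul_col (M : Matrix κ ι K) (z : ι → K) :
    M *ᵥ z = ∑ j, z j • M.col j := by
  ext i
  simp [mulVec, dotProduct, Finset.sum_apply, mul_comm]

theorem exists_finset_card_eq_sub_rank_forall_mulVec_eq_zero (M : Matrix κ ι K) :
    ∃ J : Finset ι, #J = Fintype.card ι - M.rank ∧
      ∀ z : ι → K, M *ᵥ z = 0 → (∀ j ∈ J, z j = 0) → z = 0 := by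
  obtain ⟨σ, a, ha, hspan, hli⟩ := exists_linearIndependent' K M.col
  have : Fintype σ := Fintype.ofInjective a ha
  have hcard : Fintype.card σ = M.rank := by
    rw [rank_eq_finrank_span_cols, ← hspan, finrank_span_eq_card hli]
  refine ⟨(univ.map ⟨a, ha⟩)ᶜ, by rw [card_compl, card_map, card_univ, hcard], fun z hz hJ => ?_⟩
  have hout : ∀ j ∉ Set.range a, z j = 0 := fun j hj =>
    hJ j (by simpa [Finset.mem_compl] using hj)
  have hsum : ∑ k, z (a k) • (M.col ∘ a) k = 0 := by
    rw [← hz, mulVec_eq_sum_smul_col]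
    exact Fintype.sum_of_injective a ha _ _ (fun j hj => by simp [hout j hj]) fun _ => rfl
  have hin := Fintype.linearIndependent_iff.mp hli _ hsum
  funext j
  by_cases hj : j ∈ Set.range a
  · obtain ⟨k, rfl⟩ := hj
    exact hin k
  · exact hout j hj

theorem finrank_ker_mulVecLin (M : Matrix κ ι K) :
    Module.finrank K (LinearMap.ker M.mulVecLin) = Fintype.card ι - M.rank := by
  have := LinearMap.finrank_range_add_finrank_ker M.mulVecLin
  rw [Module.finrank_fintype_fun_eq_card] at this
  rw [Matrix.rank]
  omega

end Matrix

theorem Module.Basis.exists_apply_ne_apply {R ι κ : Type*} [CommRing R] {K : Submodule R (ι → R)}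
    (w : Module.Basis κ R K) {z : ι → R} (hz : z ∈ K) {j₁ j₂ : ι} (h : z j₁ ≠ z j₂) :
    ∃ i, (w i : ι → R) j₁ ≠ (w i : ι → R) j₂ := by
  by_contra! hw
  let φ : K →ₗ[R] R :=
    (LinearMap.proj (R := R) (φ := fun _ : ι => R) j₁ - LinearMap.proj j₂) ∘ₗ K.subtype
  have hφ : φ = 0 := w.ext fun i => by simp [φ, hw i]
  have := LinearMap.congr_fun hφ ⟨z, hz⟩
  simp [φ, sub_eq_zero, h] at this

namespace Matrix

variable {α ι : Type*} [Fintype ι]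

theorem map_intCast_mulVec (A : Matrix α ι ℤ) (z : ι → ℤ) :
    A.map (Int.cast : ℤ → ℚ) *ᵥ (fun j => (z j : ℚ)) = fun i => ((A *ᵥ z) i : ℚ) :=
  funext fun i => ((Int.castRingHom ℚ).map_mulVec A z i).symm

theorem map_intCast_mulVec_eq_zero_iff (A : Matrix α ι ℤ) (z : ι → ℤ) :
    A.map (Int.cast : ℤ → ℚ) *ᵥ (fun j => (z j : ℚ)) = 0 ↔ A *ᵥ z = 0 := by
  rw [map_intCast_mulVec, funext_iff, funext_iff]
  simp

theorem exists_linearIndependent_mulVec_eq_zero [Fintype α] (A : Matrix α ι ℤ) :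
    ∃ u : Fin (Fintype.card ι - rkZ A) → ι → ℤ, (∀ i, A *ᵥ u i = 0) ∧ LinearIndependent ℤ u ∧
      ∀ z : ι → ℤ, A *ᵥ z = 0 → ∀ j₁ j₂, z j₁ ≠ z j₂ → ∃ i, u i j₁ ≠ u i j₂ := by
  set K := LinearMap.ker (A.map (Int.cast : ℤ → ℚ)).mulVecLin
  let w : Module.Basis (Fin (Fintype.card ι - rkZ A)) ℚ K :=
    Module.finBasisOfFinrankEq ℚ K (finrank_ker_mulVecLin _)
  obtain ⟨N, hN⟩ := IsLocalization.exist_integer_multiples_of_finite (nonZeroDivisors ℤ)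
    fun p : Fin (Fintype.card ι - rkZ A) × ι => (w p.1 : ι → ℚ) p.2
  choose u hu using hN
  have hN0 : ((N : ℤ) : ℚ) ≠ 0 := by exact_mod_cast nonZeroDivisors.coe_ne_zero N
  have hcast : ∀ i, (fun j => (u (i, j) : ℚ)) = ((N : ℤ) : ℚ) • (w i : ι → ℚ) := fun i => by
    ext j; simpa [zsmul_eq_mul] using hu (i, j)
  refine ⟨fun i j => u (i, j), fun i => ?_, ?_, fun z hz j₁ j₂ hne => ?_⟩
  · rw [← map_intCast_mulVec_eq_zero_iff, hcast, mulVec_smul, ← mulVecLin_apply,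
      LinearMap.mem_ker.mp (w i).2, smul_zero]
  · let cast : (ι → ℤ) →ₗ[ℤ] ι → ℚ := (Int.castAddHom ℚ).toIntLinearMap.compLeft ι
    refine LinearIndependent.of_comp cast (LinearIndependent.restrict_scalars' ℤ (K := ℚ) ?_)
    let c : Fin (Fintype.card ι - rkZ A) → ℚˣ := fun _ => Units.mk0 _ hN0
    have := (w.linearIndependent.map' K.subtype K.ker_subtype).units_smul c
    have e : c • K.subtype ∘ w = cast ∘ fun i j => u (i, j) := by
      ext i j
      exact (congrFun (hcast i) j).symm
    exact e ▸ this
  · have hzK : (fun j => (z j : ℚ)) ∈ K := by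
      simpa [K] using (map_intCast_mulVec_eq_zero_iff A z).2 hz
    obtain ⟨i, hi⟩ := w.exists_apply_ne_apply hzK (by exact_mod_cast hne)
    refine ⟨i, fun h => hi ?_⟩
    have h₁ := congrFun (hcast i) j₁
    have h₂ := congrFun (hcast i) j₂
    simp only [Pi.smul_apply, smul_eq_mul, h] at h₁ h₂
    exact mul_left_cancel₀ hN0 (h₁.symm.trans h₂)

end Matrix

noncomputable def intBox (κ : Type*) [Fintype κ] (s : ℕ) : Finset (κ → ℤ) :=
  Fintype.piFinset fun _ => Finset.Ico 0 (s : ℤ)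

section IntBox

variable {κ ι : Type*} [Fintype κ]

theorem card_intBox (s : ℕ) : #(intBox κ s) = s ^ Fintype.card κ := by
  simp [intBox, Fintype.card_piFinset]

theorem mem_intBox {s : ℕ} {t : κ → ℤ} : t ∈ intBox κ s ↔ ∀ i, 0 ≤ t i ∧ t i < s := by
  simp [intBox]

theorem card_filter_intBox_sum_mul_eq_le (s : ℕ) {a : κ → ℤ} {i₀ : κ} (ha : a i₀ ≠ 0) (c : ℤ) :
    #((intBox κ s).filter fun t => ∑ i, t i * a i = c) ≤ s ^ (Fintype.card κ - 1) := by
  have hcard : #(intBox {i // i ≠ i₀} s) = s ^ (Fintype.card κ - 1) := by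
    simp [card_intBox]
  rw [← hcard]
  refine card_le_card_of_injOn (fun t i => t i) (fun t ht => ?_) fun t ht t' ht' htt' => ?_
  · simp only [coe_filter, Set.mem_ofPred_eq, mem_intBox] at ht
    simpa [mem_intBox] using fun i _ => ht.1 i
  · simp only [coe_filter, Set.mem_ofPred_eq] at ht ht'
    have hoff : ∀ i, i ≠ i₀ → t i = t' i := fun i hi => congrFun htt' ⟨i, hi⟩
    have hsum := ht.2.trans ht'.2.symm
    rw [Fintype.sum_eq_add_sum_subtype_ne _ i₀, Fintype.sum_eq_add_sum_subtype_ne _ i₀,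
      Fintype.sum_congr _ _ fun i => by rw [hoff i i.2]] at hsum
    have h₀ : t i₀ = t' i₀ := mul_right_cancel₀ ha (add_right_cancel hsum)
    funext i
    by_cases hi : i = i₀
    · rw [hi, h₀]
    · exact hoff i hi

theorem card_filter_intBox_not_injective_mul_le [Fintype ι] (s : ℕ) (y : ι → ℤ) {u : κ → ι → ℤ}
    (hu : ∀ j₁ j₂, j₁ ≠ j₂ → ∃ i, u i j₁ ≠ u i j₂) :
    #((intBox κ s).filter fun t => ¬ Function.Injective (y + ∑ i, t i • u i)) * s ≤
      Fintype.card ι ^ 2 * s ^ Fintype.card κ := by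
  let H : ι × ι → Finset (κ → ℤ) := fun p =>
    (intBox κ s).filter fun t => ∑ i, t i * (u i p.1 - u i p.2) = y p.2 - y p.1
  have hsub : ((intBox κ s).filter fun t => ¬ Function.Injective (y + ∑ i, t i • u i)) ⊆
      univ.offDiag.biUnion H := by
    intro t ht
    obtain ⟨ht, hninj⟩ := mem_filter.mp ht
    obtain ⟨j₁, j₂, heq, hne⟩ := Function.not_injective_iff.mp hninj
    refine mem_biUnion.mpr ⟨(j₁, j₂), by simpa using hne, mem_filter.mpr ⟨ht, ?_⟩⟩
    simp only [Pi.add_apply, Finset.sum_apply, Pi.smul_apply, smul_eq_mul] at heq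
    simp only [mul_sub, Finset.sum_sub_distrib]
    linarith
  have hH : ∀ p ∈ (univ.offDiag : Finset (ι × ι)), #(H p) * s ≤ s ^ Fintype.card κ := by
    intro p hp
    obtain ⟨i₀, hi₀⟩ := hu p.1 p.2 (mem_offDiag.mp hp).2.2
    have hκ : 0 < Fintype.card κ := Fintype.card_pos_iff.mpr ⟨i₀⟩
    calc #(H p) * s ≤ s ^ (Fintype.card κ - 1) * s :=
          Nat.mul_le_mul_right _ (card_filter_intBox_sum_mul_eq_le s
            (a := fun i => u i p.1 - u i p.2) (sub_ne_zero.mpr hi₀) _)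
      _ = s ^ Fintype.card κ := by rw [← pow_succ, Nat.sub_add_cancel hκ]
  calc _ ≤ #(univ.offDiag.biUnion H) * s := Nat.mul_le_mul_right _ (card_le_card hsub)
    _ ≤ (∑ p ∈ univ.offDiag, #(H p)) * s := Nat.mul_le_mul_right _ card_biUnion_le
    _ ≤ ∑ _p ∈ (univ.offDiag : Finset (ι × ι)), s ^ Fintype.card κ := by
        rw [Finset.sum_mul]; exact sum_le_sum hH
    _ ≤ Fintype.card ι ^ 2 * s ^ Fintype.card κ := by
        rw [sum_const, smul_eq_mul, offDiag_card, card_univ, sq]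
        exact Nat.mul_le_mul_right _ (Nat.sub_le _ _)

theorem pow_le_two_mul_card_filter_intBox_injective [Fintype ι] {s : ℕ} (hs : 0 < s)
    (hms : 2 * Fintype.card ι ^ 2 ≤ s) (y : ι → ℤ) {u : κ → ι → ℤ}
    (hu : ∀ j₁ j₂, j₁ ≠ j₂ → ∃ i, u i j₁ ≠ u i j₂) :
    s ^ Fintype.card κ ≤
      2 * #((intBox κ s).filter fun t => Function.Injective (y + ∑ i, t i • u i)) := by
  have hsplit := card_filter_add_card_filter_not (s := intBox κ s)
    (fun t => Function.Injective (y + ∑ i, t i • u i))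
  have hbad := card_filter_intBox_not_injective_mul_le s y hu
  rw [card_intBox] at hsplit
  have : 2 * #((intBox κ s).filter fun t => ¬ Function.Injective (y + ∑ i, t i • u i)) * s ≤
      s ^ Fintype.card κ * s := by
    nlinarith
  have := Nat.le_of_mul_le_mul_right this hs
  omega

theorem abs_sum_mul_le_of_mem_intBox {s : ℕ} {t : κ → ℤ}
    (ht : t ∈ intBox κ s) (a : κ → ℤ) : |∑ i, t i * a i| ≤ s * ∑ i, |a i| := by
  rw [Finset.mul_sum]
  refine (abs_sum_le_sum_abs _ _).trans (sum_le_sum fun i _ => ?_)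
  obtain ⟨h₀, hs⟩ := mem_intBox.mp ht i
  rw [abs_mul, abs_of_nonneg h₀]
  exact mul_le_mul_of_nonneg_right hs.le (abs_nonneg _)

-- The shift by `T • v` with `T = (M + 1) (s + 1)` exceeds the spread `(s + 1) M` of
-- `x₀ + ∑ tᵢ uᵢ` over the box, so every coordinate becomes positive.
theorem add_smul_add_sum_smul_mem_Icc {x₀ v : ι → ℤ} {u : κ → ι → ℤ} {M V s n : ℕ}
    (hM : ∀ j, |x₀ j| + ∑ i, |u i j| ≤ M) (hv : ∀ j, 1 ≤ v j ∧ v j ≤ V)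
    (hn : (M + 1) * (V + 1) * (s + 1) ≤ n) {t : κ → ℤ} (ht : t ∈ intBox κ s) (j : ι) :
    1 ≤ (x₀ + ((M + 1) * (s + 1) : ℤ) • v + ∑ i, t i • u i) j ∧
      (x₀ + ((M + 1) * (s + 1) : ℤ) • v + ∑ i, t i • u i) j ≤ n := by
  have hdev : |x₀ j + ∑ i, t i * u i j| ≤ (s + 1) * M := by
    have h := abs_sum_mul_le_of_mem_intBox ht fun i => u i j
    have : (0 : ℤ) ≤ ∑ i, |u i j| := sum_nonneg fun i _ => abs_nonneg _
    calc _ ≤ |x₀ j| + |∑ i, t i * u i j| := abs_add_le _ _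
      _ ≤ (s + 1) * (|x₀ j| + ∑ i, |u i j|) := by nlinarith [abs_nonneg (x₀ j)]
      _ ≤ (s + 1) * M := by gcongr; exact hM j
  have hxj : (x₀ + ((M + 1) * (s + 1) : ℤ) • v + ∑ i, t i • u i) j =
      (M + 1) * (s + 1) * v j + (x₀ j + ∑ i, t i * u i j) := by
    simp [Finset.sum_apply]; ring
  have hnZ : ((M + 1) * (V + 1) * (s + 1) : ℤ) ≤ n := by exact_mod_cast hn
  obtain ⟨hlo, hhi⟩ := abs_le.mp hdev
  have hT : ((M + 1) * (s + 1) : ℤ) * 1 ≤ (M + 1) * (s + 1) * v j ∧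
      (M + 1) * (s + 1) * v j ≤ (M + 1) * (s + 1) * V :=
    ⟨by gcongr; exact (hv j).1, by gcongr; exact (hv j).2⟩
  rw [hxj]
  constructor <;> nlinarith

end IntBox

section Solutions

variable {α ι : Type*} [Fintype ι]

theorem finite_subtype_of_forall_mem_Icc {P : (ι → ℤ) → Prop} {n : ℕ}
    (h : ∀ x, P x → ∀ j, 1 ≤ x j ∧ x j ≤ n) : Finite {x : ι → ℤ // P x} :=
  Finite.of_injective (fun x j => (⟨x.1 j, mem_Icc.mpr (h x.1 x.2 j)⟩ : Icc (1 : ℤ) n))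
    fun _ _ hxy => Subtype.ext <| funext fun j => congrArg Subtype.val (congrFun hxy j)

theorem card_solutions_le_pow [Fintype α] (A : Matrix α ι ℤ) (b : α → ℤ) (n : ℕ) :
    Nat.card {x : ι → ℤ // A *ᵥ x = b ∧ ∀ j, 1 ≤ x j ∧ x j ≤ n} ≤
      n ^ (Fintype.card ι - rkZ A) := by
  obtain ⟨J, hJ, hker⟩ :=
    (A.map (Int.cast : ℤ → ℚ)).exists_finset_card_eq_sub_rank_forall_mulVec_eq_zero
  let F : {x : ι → ℤ // A *ᵥ x = b ∧ ∀ j, 1 ≤ x j ∧ x j ≤ n} → J → Icc (1 : ℤ) n :=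
    fun x j => ⟨x.1 j, mem_Icc.mpr (x.2.2 j)⟩
  have hF : Function.Injective F := by
    intro x y hxy
    have hdiff : A *ᵥ (x.1 - y.1) = 0 := by rw [mulVec_sub, x.2.1, y.2.1, sub_self]
    have hJ0 : ∀ j ∈ J, ((x.1 - y.1) j : ℚ) = 0 := fun j hj => by
      have hxyj : x.1 j = y.1 j := congrArg Subtype.val (congrFun hxy ⟨j, hj⟩)
      simp [hxyj]
    have h0 := hker _ ((map_intCast_mulVec_eq_zero_iff A _).mpr hdiff) hJ0
    exact Subtype.ext <| funext fun j => by simpa [sub_eq_zero] using congrFun h0 j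
  calc _ ≤ Nat.card (J → Icc (1 : ℤ) n) := Nat.card_le_card_of_injective F hF
    _ = _ := by
      rw [Nat.card_eq_fintype_card, Fintype.card_fun, Fintype.card_coe, Fintype.card_coe,
        Int.card_Icc, hJ, rkZ]
      simp

theorem exists_forall_pow_le_two_mul_card_injective_solutions [Fintype α]
    (A : Matrix α ι ℤ) {b : α → ℤ} (hb : ∃ x, A *ᵥ x = b) (hA : IsPositiveMat A) :
    ∃ C : ℕ, 0 < C ∧ ∀ s n : ℕ, 0 < s → 2 * Fintype.card ι ^ 2 ≤ s → C * (s + 1) ≤ n →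
      s ^ (Fintype.card ι - rkZ A) ≤ 2 * Nat.card {x : ι → ℤ //
        A *ᵥ x = b ∧ Function.Injective x ∧ ∀ j, 1 ≤ x j ∧ x j ≤ n} := by
  obtain ⟨x₀, hx₀⟩ := hb
  obtain ⟨⟨v, hv, hvpos⟩, hApair⟩ := hA
  obtain ⟨u, hu, hli, husep⟩ := A.exists_linearIndependent_mulVec_eq_zero
  have hsep : ∀ j₁ j₂, j₁ ≠ j₂ → ∃ i, u i j₁ ≠ u i j₂ := fun j₁ j₂ hne =>
    let ⟨z, hz, hz₁₂⟩ := hApair j₁ j₂ hne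
    husep z hz j₁ j₂ hz₁₂
  obtain ⟨M, hM⟩ := Finite.exists_le fun j => (x₀ j).natAbs + ∑ i, (u i j).natAbs
  obtain ⟨V, hV⟩ := Finite.exists_le fun j => (v j).natAbs
  refine ⟨(M + 1) * (V + 1), by positivity, fun s n hs hms hn => ?_⟩
  let x : (Fin (Fintype.card ι - rkZ A) → ℤ) → ι → ℤ :=
    fun t => (x₀ + ((M + 1) * (s + 1) : ℤ) • v) + ∑ i, t i • u i
  have hx_sol : ∀ t, A *ᵥ x t = b := fun t => by
    simp only [x, mulVec_add, mulVec_sum, mulVec_smul, hx₀, hv, hu, smul_zero, sum_const_zero,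
      add_zero]
  have hx_inj : Function.Injective x :=
    (add_right_injective _).comp (linearIndependent_iff_injective_fintypeLinearCombination.mp hli)
  have hx_box : ∀ t ∈ intBox _ s, ∀ j, 1 ≤ x t j ∧ x t j ≤ n :=
    fun t ht => add_smul_add_sum_smul_mem_Icc
      (fun j => by simpa using (Nat.cast_le (α := ℤ)).mpr (hM j))
      (fun j => ⟨hvpos j, (le_abs_self _).trans (by simpa using (Nat.cast_le (α := ℤ)).mpr (hV j))⟩)
      hn ht
  calc s ^ (Fintype.card ι - rkZ A)
      ≤ 2 * #((intBox _ s).filter fun t => Function.Injective (x t)) := by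
        have := pow_le_two_mul_card_filter_intBox_injective hs hms
          (x₀ + ((M + 1) * (s + 1) : ℤ) • v) hsep
        rwa [Fintype.card_fin] at this
    _ ≤ 2 * Nat.card _ := by
        have := finite_subtype_of_forall_mem_Icc (P := fun x => A *ᵥ x = b ∧
          Function.Injective x ∧ ∀ j, 1 ≤ x j ∧ x j ≤ n) fun _ hx => hx.2.2
        rw [← Nat.card_eq_finsetCard]
        gcongr
        exact Nat.card_le_card_of_injective (fun t => ⟨x t, hx_sol t, (mem_filter.mp t.2).2,
          hx_box t (mem_filter.mp t.2).1⟩) fun t t' h => Subtype.ext (hx_inj congr(($h).1))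

end Solutions

theorem exists_pos_mul_pow_le_of_forall_mul_pow_le {f : ℕ → ℝ} {a : ℝ} (ha : 0 < a)
    {C s₀ d : ℕ} (hC : 0 < C) (h : ∀ s n : ℕ, s₀ ≤ s → C * (s + 1) ≤ n → a * s ^ d ≤ f n) :
    ∃ c : ℝ, 0 < c ∧ ∃ n₀ : ℕ, ∀ n ≥ n₀, c * n ^ d ≤ f n := by
  refine ⟨a / (3 * C) ^ d, by positivity, C * (s₀ + 2), fun n hn => ?_⟩
  -- take `s = n / C - 1`; then `C (s + 1) ≤ n ≤ 3 C s`
  have hq₀ : s₀ + 2 ≤ n / C := (Nat.le_div_iff_mul_le hC).mpr (by rw [mul_comm]; exact hn)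
  obtain ⟨s, hq⟩ : ∃ s, n / C = s + 1 := ⟨n / C - 1, by omega⟩
  have hs₀ : s₀ ≤ s := by omega
  have hlo : C * (s + 1) ≤ n := hq ▸ Nat.mul_div_le n C
  have hhi : n ≤ 3 * C * s := by
    have h₁ := hq ▸ Nat.lt_mul_div_succ n hC
    have h₂ : 1 ≤ s := by omega
    nlinarith
  have hhiR : (n : ℝ) / (3 * C) ≤ s := by
    rw [div_le_iff₀ (by positivity)]
    exact_mod_cast (by linarith : n ≤ s * (3 * C))
  calc a / (3 * C) ^ d * n ^ d = a * ((n : ℝ) / (3 * C)) ^ d := by rw [div_pow]; ring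
    _ ≤ a * s ^ d := by gcongr
    _ ≤ f n := h s n hs₀ hlo

theorem sols_count_bounds_general {r m : ℕ}
    (A : Matrix (Fin r) (Fin m) ℤ) (b : Fin r → ℤ)
    (hb : ∃ x : Fin m → ℤ, A.mulVec x = b) :
    (∀ n : ℕ,
      Nat.card {x : Fin m → ℤ //
          A.mulVec x = b ∧ Function.Injective x ∧ ∀ j, 1 ≤ x j ∧ x j ≤ n} ≤
        Nat.card {x : Fin m → ℤ // A.mulVec x = b ∧ ∀ j, 1 ≤ x j ∧ x j ≤ n} ∧
      Nat.card {x : Fin m → ℤ // A.mulVec x = b ∧ ∀ j, 1 ≤ x j ∧ x j ≤ n} ≤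
        n ^ (m - rkZ A)) ∧
    (IsPositiveMat A → ∃ c : ℝ, 0 < c ∧ ∃ n₀ : ℕ, ∀ n ≥ n₀,
      c * (n : ℝ) ^ (m - rkZ A) ≤
        (Nat.card {x : Fin m → ℤ //
          A.mulVec x = b ∧ Function.Injective x ∧ ∀ j, 1 ≤ x j ∧ x j ≤ n} : ℝ)) := by
  refine ⟨fun n => ⟨?_, by simpa using card_solutions_le_pow A b n⟩, fun hA => ?_⟩
  · have := finite_subtype_of_forall_mem_Icc (P := fun x => A *ᵥ x = b ∧ ∀ j, 1 ≤ x j ∧ x j ≤ n)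
      fun _ hx => hx.2
    exact Nat.card_le_card_of_injective (Subtype.impEmbedding _ _ fun _ hx => ⟨hx.1, hx.2.2⟩)
      (Subtype.impEmbedding _ _ _).injective
  obtain ⟨C, hC, hcount⟩ := exists_forall_pow_le_two_mul_card_injective_solutions A hb hA
  refine exists_pos_mul_pow_le_of_forall_mul_pow_le (s₀ := 2 * m ^ 2 + 1) (a := 1 / 2)
    one_half_pos hC fun s n hs hn => ?_
  have := hcount s n (by omega) (by simp only [Fintype.card_fin]; omega) hn
  rw [Fintype.card_fin] at this
  have := (Nat.cast_le (α := ℝ)).mpr this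
  push_cast at this
  linarith

/-- **Lemma (counting solutions in `[n]^m`).** -/
theorem sols_count_bounds {r m : ℕ} (hr : 0 < r) (hrm : r < m)
    (A : Matrix (Fin r) (Fin m) ℤ) (b : Fin r → ℤ)
    (hb : ∃ x : Fin m → ℤ, A.mulVec x = b) :
    (∀ n : ℕ,
      Nat.card {x : Fin m → ℤ //
          A.mulVec x = b ∧ Function.Injective x ∧ ∀ j, 1 ≤ x j ∧ x j ≤ n} ≤
        Nat.card {x : Fin m → ℤ // A.mulVec x = b ∧ ∀ j, 1 ≤ x j ∧ x j ≤ n} ∧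
      Nat.card {x : Fin m → ℤ // A.mulVec x = b ∧ ∀ j, 1 ≤ x j ∧ x j ≤ n} ≤
        n ^ (m - rkZ A)) ∧
    (IsPositiveMat A → ∃ c : ℝ, 0 < c ∧ ∃ n₀ : ℕ, ∀ n ≥ n₀,
      c * (n : ℝ) ^ (m - rkZ A) ≤
        (Nat.card {x : Fin m → ℤ //
          A.mulVec x = b ∧ Function.Injective x ∧ ∀ j, 1 ≤ x j ∧ x j ≤ n} : ℝ)) :=
  sols_count_bounds_general A b hb
end

section
/- Let m > r be positive integers, A ∈ ℤ^{r×m} a positive matrix, b ∈ ℤ^r, and 𝔓 ⊆ 𝔓_0(A). Then for every K ∈ ℕ there is a constant C (depending only on A, b, 𝔓 and K) such that for all n ∈ ℕ and all sets Z ⊆ {1,…,n} with |Z| ≤ K, the number of solutions y ∈ S_𝔓(A,b) ∩ [n]^m whose set of entries {y} meets Z is at most C · n^{m − rk(A) − 1}. -/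
open Matrix Finset MeasureTheory ProbabilityTheory Filter Topology
open scoped BoundedContinuousFunction NNReal ENNReal

attribute [local instance] Classical.propDecidable

/-!
A solution of `A y = b` is determined by its coordinates in a set `J` of at most
`dim ker A` indices, so a box `T^m` contains at most `|T|^(m - rk A)` of them. Fixing one
entry `y j = z` costs one more dimension as soon as some kernel vector is nonzero at `j`, which a
positive kernel vector guarantees at every `j`. Summing over the `|Z| · m` choices of `z ∈ Z`
and of the position `j` bounds the solutions meeting `Z` by `|Z| · m · n^(m - rk A - 1)`.
-/

open Module

theorem Submodule.exists_separating_coords {K ι : Type*} [Field K] [Fintype ι] [DecidableEq ι]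
    (W : Submodule K (ι → K)) :
    ∃ J : Finset ι, #J ≤ finrank K W ∧ ∀ w ∈ W, (∀ j ∈ J, w j = 0) → w = 0 := by
  induction h : finrank K W using Nat.strong_induction_on generalizing W with
  | _ d ih =>
  by_cases hW : W = ⊥
  · exact ⟨∅, by simp, fun w hw _ => by simpa [hW] using hw⟩
  obtain ⟨w₀, hw₀, hw₀0⟩ := Submodule.exists_mem_ne_zero_of_ne_bot hW
  obtain ⟨j₀, hj₀⟩ := Function.ne_iff.mp hw₀0
  have hlt : finrank K ↥(W ⊓ LinearMap.ker (LinearMap.proj j₀)) < d :=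
    h ▸ Submodule.finrank_lt_finrank_of_lt
      (inf_le_left.lt_of_ne fun hW => hj₀ (hW ▸ hw₀ : w₀ ∈ W ⊓ _).2)
  obtain ⟨J, hJ, hJsep⟩ := ih _ hlt _ rfl
  refine ⟨insert j₀ J, (card_insert_le _ _).trans (by omega), fun w hw hwJ => ?_⟩
  exact hJsep w ⟨hw, hwJ j₀ (mem_insert_self _ _)⟩ fun j hj => hwJ j (mem_insert_of_mem hj)

theorem card_le_pow_of_sub_mem {ι : Type*} [Fintype ι] [DecidableEq ι] {T : Finset ℤ}
    (hT : T.Nonempty) {W : Submodule ℚ (ι → ℚ)} {d : ℕ} (hd : finrank ℚ W ≤ d)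
    {S : Finset (ι → ℤ)} (hST : S ⊆ Fintype.piFinset fun _ => T)
    (hSW : ∀ y ∈ S, ∀ y' ∈ S, (fun i => ((y - y') i : ℚ)) ∈ W) : #S ≤ #T ^ d := by
  obtain ⟨J, hJ, hJsep⟩ := W.exists_separating_coords
  calc #S ≤ #(Fintype.piFinset fun _ : J => T) := by
        refine card_le_card_of_injOn J.restrict (fun y hy => ?_) fun y hy y' hy' hyy' => ?_
        · simpa using fun j _ => Fintype.mem_piFinset.mp (hST hy) j
        · have := hJsep _ (hSW y hy y' hy') fun j hj => by
            simpa [sub_eq_zero] using congrFun hyy' ⟨j, hj⟩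
          funext i
          simpa [sub_eq_zero] using congrFun this i
    _ = #T ^ #J := by simp
    _ ≤ #T ^ d := pow_le_pow_right₀ hT.card_pos (hJ.trans hd)

theorem Matrix.map_intCast_mulVec_s5 {κ ι : Type*} [Fintype ι] (A : Matrix κ ι ℤ) (y : ι → ℤ) :
    A.map (Int.cast : ℤ → ℚ) *ᵥ (fun i => (y i : ℚ)) = fun k => ((A *ᵥ y) k : ℚ) :=
  funext fun k => (RingHom.map_mulVec (Int.castRingHom ℚ) A y k).symm

section
variable {κ ι : Type*} [Fintype κ] [Fintype ι]

theorem finrank_ker_eq_card_sub_rkZ (A : Matrix κ ι ℤ) :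
    finrank ℚ (LinearMap.ker (A.map (Int.cast : ℤ → ℚ)).mulVecLin) = Fintype.card ι - rkZ A := by
  rw [rkZ, Matrix.rank, ← finrank_fintype_fun_eq_card (R := ℚ),
    ← (A.map (Int.cast : ℤ → ℚ)).mulVecLin.finrank_range_add_finrank_ker, Nat.add_sub_cancel_left]

variable [DecidableEq ι]

theorem card_filter_mulVec_eq_apply_eq_le (A : Matrix κ ι ℤ) (b : κ → ℤ) {j₀ : ι}
    (hA : ∃ v, A *ᵥ v = 0 ∧ v j₀ ≠ 0) (T : Finset ℤ) (z : ℤ) :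
    #{y ∈ Fintype.piFinset (fun _ => T) | A *ᵥ y = b ∧ y j₀ = z} ≤
      #T ^ (Fintype.card ι - rkZ A - 1) := by
  obtain hS | ⟨y₀, hy₀⟩ := Finset.eq_empty_or_nonempty
    {y ∈ Fintype.piFinset (fun _ => T) | A *ᵥ y = b ∧ y j₀ = z}
  · simp [hS]
  obtain ⟨v, hv, hvj₀⟩ := hA
  set U := LinearMap.ker (A.map (Int.cast : ℤ → ℚ)).mulVecLin with hU
  set W := U ⊓ LinearMap.ker (LinearMap.proj j₀ : (ι → ℚ) →ₗ[ℚ] ℚ)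
  have hlt : W < U := by
    refine inf_le_left.lt_of_ne fun hWU => hvj₀ ?_
    have hvU : (fun i => (v i : ℚ)) ∈ U := by
      rw [hU, LinearMap.mem_ker, Matrix.mulVecLin_apply, Matrix.map_intCast_mulVec_s5, hv]
      rfl
    exact_mod_cast (LinearMap.mem_ker.mp (hWU.symm ▸ hvU : _ ∈ W).2 : ((v j₀ : ℤ) : ℚ) = 0)
  have hd : finrank ℚ W ≤ Fintype.card ι - rkZ A - 1 := by
    have := (Submodule.finrank_lt_finrank_of_lt hlt).trans_eq (finrank_ker_eq_card_sub_rkZ A)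
    omega
  simp only [Finset.mem_filter, Fintype.mem_piFinset] at hy₀
  refine card_le_pow_of_sub_mem ⟨y₀ j₀, hy₀.1 j₀⟩ hd (filter_subset _ _) fun y hy y' hy' => ?_
  simp only [Finset.mem_filter] at hy hy'
  refine Submodule.mem_inf.mpr ⟨?_, ?_⟩
  · rw [hU, LinearMap.mem_ker, Matrix.mulVecLin_apply, Matrix.map_intCast_mulVec_s5]
    simp only [mulVec_sub, hy.2.1, hy'.2.1, Pi.sub_apply, sub_self, Int.cast_zero]
    rfl
  · simp [hy.2.2, hy'.2.2]

theorem card_filter_mulVec_eq_exists_mem_le (A : Matrix κ ι ℤ) (b : κ → ℤ)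
    (hA : ∃ v, A *ᵥ v = 0 ∧ ∀ j, v j ≠ 0) (T Z : Finset ℤ) :
    #{y ∈ Fintype.piFinset (fun _ => T) | A *ᵥ y = b ∧ ∃ j, y j ∈ Z} ≤
      #Z * Fintype.card ι * #T ^ (Fintype.card ι - rkZ A - 1) := by
  obtain ⟨v, hv, hv0⟩ := hA
  calc _ ≤ #((Z ×ˢ univ).biUnion fun p : ℤ × ι =>
          {y ∈ Fintype.piFinset (fun _ => T) | A *ᵥ y = b ∧ y p.2 = p.1}) := by
        refine card_le_card fun y hy => ?_
        obtain ⟨hyT, hyb, j, hj⟩ := Finset.mem_filter.mp hy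
        exact mem_biUnion.mpr ⟨(y j, j), by simpa using hj, mem_filter.mpr ⟨hyT, hyb, rfl⟩⟩
    _ ≤ ∑ p ∈ Z ×ˢ univ, #T ^ (Fintype.card ι - rkZ A - 1) :=
        card_biUnion_le.trans <| sum_le_sum fun p _ =>
          card_filter_mulVec_eq_apply_eq_le A b ⟨v, hv, hv0 p.2⟩ T p.1
    _ = _ := by simp [card_product]

end

theorem typeSols_meeting_fixed_set_general {r m : ℕ}
    (A : Matrix (Fin r) (Fin m) ℤ) (hApos : IsPositiveMat A) (b : Fin r → ℤ)
    (P : Set (Setoid (Fin m))) (K : ℕ) :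
    ∃ C : ℝ, ∀ n : ℕ, ∀ Z : Finset ℤ,
      (∀ z ∈ Z, 1 ≤ z ∧ z ≤ (n : ℤ)) → Z.card ≤ K →
      (Nat.card {y : Fin m → ℤ //
          A.mulVec y = b ∧ Setoid.ker y ∈ P ∧ (∀ j, 1 ≤ y j ∧ y j ≤ n) ∧
            ∃ j, y j ∈ Z} : ℝ) ≤
        C * (n : ℝ) ^ (m - rkZ A - 1) := by
  obtain ⟨v, hv, hvpos⟩ := hApos.1
  refine ⟨K * m, fun n Z _ hZK => ?_⟩
  have hS := card_filter_mulVec_eq_exists_mem_le A b ⟨v, hv, fun j => (hvpos j).ne'⟩ (Icc 1 n) Z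
  simp only [Int.card_Icc, add_sub_cancel_right, Int.toNat_natCast, Fintype.card_fin] at hS
  have hcount : Nat.card {y : Fin m → ℤ // A.mulVec y = b ∧ Setoid.ker y ∈ P ∧
      (∀ j, 1 ≤ y j ∧ y j ≤ n) ∧ ∃ j, y j ∈ Z} ≤ K * m * n ^ (m - rkZ A - 1) := by
    refine le_trans ?_ (hS.trans (Nat.mul_le_mul_right _ (Nat.mul_le_mul_right m hZK)))
    rw [← Nat.card_eq_finsetCard]
    exact Nat.card_le_card_of_injective
      (fun y => ⟨y.1, by simpa using ⟨y.2.2.2.1, y.2.1, y.2.2.2.2⟩⟩)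
      fun y y' h => Subtype.ext (Subtype.mk.inj h)
  exact_mod_cast hcount

/-- **Lemma (solutions meeting a fixed bounded set, first part).** -/
theorem typeSols_meeting_fixed_set {r m : ℕ} (hr : 0 < r) (hrm : r < m)
    (A : Matrix (Fin r) (Fin m) ℤ) (hApos : IsPositiveMat A) (b : Fin r → ℤ)
    (P : Set (Setoid (Fin m))) (hPsub : P ⊆ partitionFamily A)
    (hPpos : ∀ s ∈ P, IsPositiveMat (contract A s)) (K : ℕ) :
    ∃ C : ℝ, ∀ n : ℕ, ∀ Z : Finset ℤ,
      (∀ z ∈ Z, 1 ≤ z ∧ z ≤ (n : ℤ)) → Z.card ≤ K →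
      (Nat.card {y : Fin m → ℤ //
          A.mulVec y = b ∧ Setoid.ker y ∈ P ∧ (∀ j, 1 ≤ y j ∧ y j ≤ n) ∧
            ∃ j, y j ∈ Z} : ℝ) ≤
        C * (n : ℝ) ^ (m - rkZ A - 1) :=
  typeSols_meeting_fixed_set_general A hApos b P K
end

section
/- Let m > r be positive integers, A ∈ ℤ^{r×m} a positive and abundant matrix, b ∈ ℤ^r, and 𝔓 ⊆ 𝔓_0(A). Then for every K ∈ ℕ there is a constant C (depending only on A, b, 𝔓 and K) such that for all n ∈ ℕ and all sets Z ⊆ {1,…,n} with |Z| ≤ K, the number of solutions y ∈ S_𝔓(A,b) ∩ [n]^m whose set of entries {y} meets Z in at least two elements is at most C · n^{m − rk(A) − 2}. -/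
open Matrix Finset MeasureTheory ProbabilityTheory Filter Topology
open scoped BoundedContinuousFunction NNReal ENNReal

attribute [local instance] Classical.propDecidable

/-! Abundance says that deleting two columns `i ≠ j` does not lower the rank of `A`, so some
`rk A` columns avoiding `i` and `j` are linearly independent. A solution of `A y = b` is then
determined by its entries outside those columns; once the entries at `i` and `j` are prescribed,
only `m - rk A - 2` coordinates remain free, giving at most `n ^ (m - rk A - 2)` solutions in
`[n]^m`. A solution whose entries meet `Z` twice has such prescribed entries for one of at most
`(m |Z|)^2` choices of positions `i ≠ j` and values in `Z`. -/

theorem RingHom.comp_mulVec {R S α ι : Type*} [NonAssocSemiring R] [NonAssocSemiring S]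
    [Fintype ι] (f : R →+* S) (M : Matrix α ι R) (v : ι → R) :
    f ∘ (M *ᵥ v) = M.map f *ᵥ (f ∘ v) :=
  funext (f.map_mulVec M v)

namespace Matrix

variable {α ι : Type*} [Fintype ι]

theorem eq_of_mulVec_eq_of_eqOn_compl {R : Type*} [CommRing R] {B : Matrix α ι R}
    {T : Finset ι} (hT : LinearIndepOn R B.col T) {v w : ι → R} (h : B *ᵥ v = B *ᵥ w)
    (hvw : ∀ j ∉ T, v j = w j) : v = w := by
  have hsplit : ∀ u : ι → R, B *ᵥ u = ∑ j ∈ T, u j • B.col j + ∑ j ∈ Tᶜ, u j • B.col j := by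
    intro u
    ext k
    simp [mulVec, dotProduct, Finset.sum_apply, mul_comm, ← Finset.sum_add_sum_compl T]
  have hT' : ∑ j ∈ T, v j • B.col j = ∑ j ∈ T, w j • B.col j := by
    have hcompl : ∑ j ∈ Tᶜ, v j • B.col j = ∑ j ∈ Tᶜ, w j • B.col j :=
      Finset.sum_congr rfl fun j hj => by rw [hvw j (Finset.mem_compl.mp hj)]
    rw [hsplit, hsplit, hcompl] at h
    exact add_right_cancel h
  funext j
  by_cases hj : j ∈ T
  · exact linearIndepOn_finset_iffₛ.mp hT v w hT' j hj
  · exact hvw j hj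

theorem exists_subset_card_eq_rank_linearIndepOn {K : Type*} [Field K] [Fintype α]
    (B : Matrix α ι K) (Q : Finset ι) :
    ∃ T ⊆ Q, T.card = (B.submatrix id ((↑) : Q → ι)).rank ∧ LinearIndepOn K B.col T := by
  obtain ⟨κ, a, ha, hspan, hli⟩ := exists_linearIndependent' K (fun q : Q => B.col q)
  have : Fintype κ := have := Finite.of_injective a ha; Fintype.ofFinite κ
  have hinj : Function.Injective (fun k => (a k : ι)) := Subtype.val_injective.comp ha
  refine ⟨Finset.univ.image fun k => (a k : ι), ?_, ?_, ?_⟩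
  · intro j hj
    obtain ⟨k, -, rfl⟩ := Finset.mem_image.mp hj
    exact (a k).2
  · rw [Finset.card_image_of_injective _ hinj, Finset.card_univ, rank_eq_finrank_span_cols,
      ← finrank_span_eq_card hli, hspan]
    rfl
  · rw [Finset.coe_image, Finset.coe_univ, Set.image_univ, linearIndepOn_range_iff hinj]
    exact hli

end Matrix

theorem Nat.card_subtype_le_finsetCard {γ : Type*} {p : γ → Prop} {s : Finset γ}
    (h : ∀ x, p x → x ∈ s) : Nat.card {x // p x} ≤ #s :=
  (Nat.card_mono s.finite_toSet h).trans_eq (Nat.card_eq_finsetCard s)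

theorem card_le_card_pow_of_injOn_restrict {ι β : Type*} [Fintype ι] [DecidableEq ι]
    {S : Finset (ι → β)} {t : Finset β} (hS : S ⊆ Fintype.piFinset fun _ => t) (F : Finset ι)
    (hinj : Set.InjOn (fun (y : ι → β) (j : F) => y j) (S : Set (ι → β))) : #S ≤ #t ^ #F :=
  calc #S ≤ #(Fintype.piFinset fun _ : F => t) :=
        card_le_card_of_injOn _ (fun y hy => Fintype.mem_piFinset.2 fun j =>
          Fintype.mem_piFinset.1 (hS hy) j) hinj
    _ = #t ^ #F := by simp

theorem card_filter_two_le_card_image_inter_le {ι β : Type*} [Fintype ι] [DecidableEq β]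
    (S : Finset (ι → β)) (Z : Finset β) (N : ℕ)
    (h : ∀ i j, i ≠ j → ∀ z₁ ∈ Z, ∀ z₂ ∈ Z, #{y ∈ S | y i = z₁ ∧ y j = z₂} ≤ N) :
    #{y ∈ S | 2 ≤ #(univ.image y ∩ Z)} ≤ (Fintype.card ι * #Z) ^ 2 * N := by
  set I := (univ : Finset ι).offDiag ×ˢ (Z ×ˢ Z)
  have hcover : {y ∈ S | 2 ≤ #(univ.image y ∩ Z)} ⊆
      I.biUnion fun q => {y ∈ S | y q.1.1 = q.2.1 ∧ y q.1.2 = q.2.2} := by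
    intro y hy
    obtain ⟨hyS, htwo⟩ := mem_filter.1 hy
    obtain ⟨z₁, hz₁, z₂, hz₂, hne⟩ := one_lt_card.1 htwo
    obtain ⟨hz₁y, hz₁Z⟩ := mem_inter.1 hz₁
    obtain ⟨hz₂y, hz₂Z⟩ := mem_inter.1 hz₂
    obtain ⟨i, -, rfl⟩ := mem_image.1 hz₁y
    obtain ⟨j, -, rfl⟩ := mem_image.1 hz₂y
    refine mem_biUnion.2 ⟨((i, j), (y i, y j)), ?_, mem_filter.2 ⟨hyS, rfl, rfl⟩⟩
    simp only [I, mem_product, mem_offDiag, mem_univ, true_and]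
    exact ⟨fun hij => hne (hij ▸ rfl), hz₁Z, hz₂Z⟩
  have hI : #I ≤ (Fintype.card ι * #Z) ^ 2 := by
    simp only [I, card_product, offDiag_card, card_univ]
    calc (Fintype.card ι * Fintype.card ι - Fintype.card ι) * (#Z * #Z)
        ≤ Fintype.card ι * Fintype.card ι * (#Z * #Z) := Nat.mul_le_mul_right _ (Nat.sub_le _ _)
      _ = (Fintype.card ι * #Z) ^ 2 := by ring
  calc _ ≤ _ := card_le_card hcover
    _ ≤ #I * N := card_biUnion_le_card_mul _ _ _ fun q hq => by
        simp only [I, mem_product, mem_offDiag, mem_univ, true_and] at hq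
        exact h _ _ hq.1 _ hq.2.1 _ hq.2.2
    _ ≤ _ := Nat.mul_le_mul_right _ hI

section BoxSolutions

variable {α ι : Type*} [Fintype ι] [DecidableEq ι]

noncomputable def boxSols (A : Matrix α ι ℤ) (b : α → ℤ) (n : ℕ) : Finset (ι → ℤ) :=
  {y ∈ Fintype.piFinset fun _ => Icc 1 (n : ℤ) | A *ᵥ y = b}

theorem boxSols_subset (A : Matrix α ι ℤ) (b : α → ℤ) (n : ℕ) :
    boxSols A b n ⊆ Fintype.piFinset fun _ => Icc 1 (n : ℤ) :=
  filter_subset _ _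

theorem card_boxSols_fixed_two_le [Fintype α] (A : Matrix α ι ℤ) (b : α → ℤ) (n : ℕ)
    {i j : ι} (hij : i ≠ j) (hrank : rkZ (colSub A {i, j}ᶜ) = rkZ A) (z₁ z₂ : ℤ) :
    #{y ∈ boxSols A b n | y i = z₁ ∧ y j = z₂} ≤ n ^ (Fintype.card ι - rkZ A - 2) := by
  obtain ⟨T, hTQ, hTcard, hT⟩ :=
    (A.map (Int.castRingHom ℚ)).exists_subset_card_eq_rank_linearIndepOn {i, j}ᶜ
  rw [submatrix_map] at hTcard
  replace hTcard : #T = rkZ A := hTcard.trans hrank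
  have hdisj : Disjoint T {i, j} := disjoint_of_subset_left hTQ disjoint_compl_left
  have hfree : #(T ∪ {i, j})ᶜ = Fintype.card ι - rkZ A - 2 := by
    rw [card_compl, card_union_of_disjoint hdisj, hTcard, card_pair hij]
    omega
  have hinj : Set.InjOn (fun (y : ι → ℤ) (k : ↥(T ∪ {i, j})ᶜ) => y k)
      ↑{y ∈ boxSols A b n | y i = z₁ ∧ y j = z₂} := by
    intro y hy y' hy' heq
    simp only [coe_filter, boxSols, mem_filter] at hy hy'
    have hagree : ∀ k ∉ T, y k = y' k := by
      intro k hk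
      by_cases hkF : k ∈ (T ∪ {i, j})ᶜ
      · simpa using congrFun heq ⟨k, hkF⟩
      · obtain rfl | rfl : k = i ∨ k = j := by simpa [hk, or_iff_not_imp_left] using hkF
        · rw [hy.2.1, hy'.2.1]
        · rw [hy.2.2, hy'.2.2]
    refine Int.cast_injective.comp_left (Matrix.eq_of_mulVec_eq_of_eqOn_compl
      (v := Int.castRingHom ℚ ∘ y) (w := Int.castRingHom ℚ ∘ y') hT ?_ fun k hk => congrArg Int.cast (hagree k hk))
    rw [← RingHom.comp_mulVec, ← RingHom.comp_mulVec, hy.1.2, hy'.1.2]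
  calc _ ≤ #(Icc (1 : ℤ) n) ^ #(T ∪ {i, j})ᶜ :=
        card_le_card_pow_of_injOn_restrict
          (fun y hy => boxSols_subset A b n (mem_filter.1 hy).1) _ hinj
    _ = n ^ (Fintype.card ι - rkZ A - 2) := by
      rw [Int.card_Icc, add_sub_cancel_right, Int.toNat_natCast, hfree]

end BoxSolutions

theorem typeSols_meeting_fixed_set_twice_general {r m : ℕ}
    (A : Matrix (Fin r) (Fin m) ℤ) (hAab : IsAbundantMat A)
    (b : Fin r → ℤ)
    (P : Set (Setoid (Fin m))) (K : ℕ) :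
    ∃ C : ℝ, ∀ n : ℕ, ∀ Z : Finset ℤ,
      (∀ z ∈ Z, 1 ≤ z ∧ z ≤ (n : ℤ)) → Z.card ≤ K →
      (Nat.card {y : Fin m → ℤ //
          A.mulVec y = b ∧ Setoid.ker y ∈ P ∧ (∀ j, 1 ≤ y j ∧ y j ≤ n) ∧
            2 ≤ ((Finset.image y Finset.univ) ∩ Z).card} : ℝ) ≤
        C * (n : ℝ) ^ (m - rkZ A - 2) := by
  have hrank : ∀ i j : Fin m, i ≠ j → rkZ (colSub A {i, j}ᶜ) = rkZ A := fun i j hij =>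
    hAab.2 _ (by rw [card_compl, card_pair hij])
  refine ⟨((m * K) ^ 2 : ℕ), fun n Z _ hZK => ?_⟩
  have hcount := card_filter_two_le_card_image_inter_le (boxSols A b n) Z _
    fun i j hij z₁ _ z₂ _ => card_boxSols_fixed_two_le A b n hij (hrank i j hij) z₁ z₂
  rw [Fintype.card_fin] at hcount
  have hK : (m * #Z) ^ 2 ≤ (m * K) ^ 2 := by gcongr
  rw [← Nat.cast_pow, ← Nat.cast_mul, Nat.cast_le]
  refine (Nat.card_subtype_le_finsetCard fun y hy => ?_).trans
    (hcount.trans (Nat.mul_le_mul_right _ hK))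
  obtain ⟨hAy, -, hbox, htwo⟩ := hy
  simp only [boxSols, mem_filter, Fintype.mem_piFinset, mem_Icc]
  exact ⟨⟨hbox, hAy⟩, htwo⟩

/-- **Lemma (solutions meeting a fixed bounded set in at least two elements).** -/
theorem typeSols_meeting_fixed_set_twice {r m : ℕ} (hr : 0 < r) (hrm : r < m)
    (A : Matrix (Fin r) (Fin m) ℤ) (hApos : IsPositiveMat A) (hAab : IsAbundantMat A)
    (b : Fin r → ℤ)
    (P : Set (Setoid (Fin m))) (hPsub : P ⊆ partitionFamily A)
    (hPpos : ∀ s ∈ P, IsPositiveMat (contract A s)) (K : ℕ) :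
    ∃ C : ℝ, ∀ n : ℕ, ∀ Z : Finset ℤ,
      (∀ z ∈ Z, 1 ≤ z ∧ z ≤ (n : ℤ)) → Z.card ≤ K →
      (Nat.card {y : Fin m → ℤ //
          A.mulVec y = b ∧ Setoid.ker y ∈ P ∧ (∀ j, 1 ≤ y j ∧ y j ≤ n) ∧
            2 ≤ ((Finset.image y Finset.univ) ∩ Z).card} : ℝ) ≤
        C * (n : ℝ) ^ (m - rkZ A - 2) :=
  typeSols_meeting_fixed_set_twice_general A hAab b P K
end

section
/- Let m_A > r_A and m_B > r_B be positive integers, A ∈ ℤ^{r_A×m_A}, B ∈ ℤ^{r_B×m_B}, P ⊆ [m_A], M : P → [m_B] an injection, and Q ⊆ [m_A + m_B − |P|]. Set Q_1 = Q ∩ [m_A] and Q_2 = Q ∖ Q_1. Then rk((A ×_M B)^{Q̄}) ≥ rk(A^{[m_A]∖Q_1}) + rk(B^{([m_B]∖M(P))∖Q_2'}), where Q_2' is the set of columns of B^{[m_B]∖M(P)} corresponding to the indices in Q_2. In particular, rk(A ×_M B) ≥ rk(A) + rk(B^{[m_B]∖M(P)}). -/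
open Matrix Finset MeasureTheory ProbabilityTheory Filter Topology
open scoped BoundedContinuousFunction NNReal ENNReal

attribute [local instance] Classical.propDecidable

/-- Column index type of the compounded matrix `A ×_M B`: the columns of `A` outside `P`,
the merged columns indexed by `P`, and the columns of `B` outside `M(P)`. -/
abbrev compIdx {mA mB : ℕ} (P : Finset (Fin mA)) (M : Fin mA → Fin mB) : Type :=
  ({j : Fin mA // j ∉ P} ⊕ {j : Fin mA // j ∈ P}) ⊕ {j : Fin mB // j ∉ P.image M}

/-- The compounded matrix `A ×_M B`, whose first block row is
`(A^{[mA]∖P} | columns of A indexed by P | 0)` and whose second block row is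
`(0 | columns of B indexed by M(P) | B^{[mB]∖M(P)})`. -/
noncomputable def compMat {rA mA rB mB : ℕ}
    (A : Matrix (Fin rA) (Fin mA) ℤ) (B : Matrix (Fin rB) (Fin mB) ℤ)
    (P : Finset (Fin mA)) (M : Fin mA → Fin mB) :
    Matrix (Fin rA ⊕ Fin rB) (compIdx P M) ℤ :=
  fun i c =>
    match i, c with
    | Sum.inl i, Sum.inl (Sum.inl j) => A i j.1
    | Sum.inl i, Sum.inl (Sum.inr j) => A i j.1
    | Sum.inl _, Sum.inr _ => 0
    | Sum.inr _, Sum.inl (Sum.inl _) => 0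
    | Sum.inr i, Sum.inl (Sum.inr j) => B i (M j.1)
    | Sum.inr i, Sum.inr j => B i j.1


/-! After reordering its columns, `A ×_M B` is block lower triangular, `[[A, 0], [C, B']]` with
`B' = B^{[mB]∖M(P)}`, and deleting columns preserves that shape. For such a matrix, projecting its
column space onto the first block of rows gives the column space of `A`, while the kernel of that
projection contains every `(0, B' y)`; rank–nullity gives `rk A + rk B' ≤ rk [[A, 0], [C, B']]`. -/

open Module

theorem Submodule.finrank_map_add_finrank_inf_ker {K V W : Type*} [DivisionRing K]
    [AddCommGroup V] [Module K V] [FiniteDimensional K V] [AddCommGroup W] [Module K W]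
    (p : Submodule K V) (f : V →ₗ[K] W) :
    finrank K (p.map f) + finrank K ↥(p ⊓ LinearMap.ker f) = finrank K p := by
  rw [← LinearMap.range_domRestrict, ← map_comap_subtype, finrank_map_subtype_eq]
  exact (f.domRestrict p).finrank_range_add_finrank_ker

namespace Matrix

variable {K m l n o γ : Type*} [Field K] [Fintype m] [Fintype l] [Fintype n] [Fintype o]

theorem rank_add_rank_le_rank_fromBlocks_zero₁₂ (A : Matrix m n K) (C : Matrix l n K)
    (D : Matrix l o K) : A.rank + D.rank ≤ (fromBlocks A 0 C D).rank := by
  set R := LinearMap.range (fromBlocks A 0 C D).mulVecLin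
  set top : ((m ⊕ l) → K) →ₗ[K] (m → K) := LinearMap.funLeft K K Sum.inl
  set bot : ((m ⊕ l) → K) →ₗ[K] (l → K) := LinearMap.funLeft K K Sum.inr
  have hA : A.rank ≤ finrank K (R.map top) := by
    refine Submodule.finrank_mono ?_
    rintro _ ⟨x, rfl⟩
    refine ⟨_, ⟨Sum.elim x 0, rfl⟩, ?_⟩
    ext i
    simp [top, fromBlocks_mulVec]
  have hD : D.rank ≤ finrank K ((R ⊓ LinearMap.ker top).map bot) := by
    refine Submodule.finrank_mono ?_
    rintro _ ⟨y, rfl⟩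
    refine ⟨_, ⟨⟨Sum.elim 0 y, rfl⟩, ?_⟩, ?_⟩
    · ext i
      simp [top, fromBlocks_mulVec]
    · ext i
      simp [bot, fromBlocks_mulVec]
  have := R.finrank_map_add_finrank_inf_ker top
  have := Submodule.finrank_map_le bot (R ⊓ LinearMap.ker top)
  change _ ≤ finrank K R
  omega

theorem rank_submatrix_inl_add_rank_submatrix_inr_le [Fintype γ] (N : Matrix (m ⊕ l) γ K)
    (u : n → γ) (w : o → γ) (hw : N.submatrix Sum.inl w = 0) :
    (N.submatrix Sum.inl u).rank + (N.submatrix Sum.inr w).rank ≤ N.rank := by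
  have hblocks : N.submatrix id (Sum.elim u w) =
      fromBlocks (N.submatrix Sum.inl u) 0 (N.submatrix Sum.inr u) (N.submatrix Sum.inr w) := by
    rw [← hw]
    ext (i | i) (j | j) <;> rfl
  calc _ ≤ (N.submatrix id (Sum.elim u w)).rank := by
        rw [hblocks]
        exact rank_add_rank_le_rank_fromBlocks_zero₁₂ _ _ _
    _ ≤ N.rank := rank_submatrix_le _ _ _

end Matrix

theorem rkZ_submatrix_inl_add_rkZ_submatrix_inr_le {m l n o γ : Type*} [Fintype m] [Fintype l]
    [Fintype n] [Fintype o] [Fintype γ] (N : Matrix (m ⊕ l) γ ℤ) (u : n → γ) (w : o → γ)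
    (hw : N.submatrix Sum.inl w = 0) :
    rkZ (N.submatrix Sum.inl u) + rkZ (N.submatrix Sum.inr w) ≤ rkZ N :=
  (N.map (Int.cast : ℤ → ℚ)).rank_submatrix_inl_add_rank_submatrix_inr_le u w
    (by rw [submatrix_map, hw, Matrix.map_zero _ Int.cast_zero])

namespace compIdx

variable {mA mB : ℕ} {P : Finset (Fin mA)} {M : Fin mA → Fin mB}

def ofA (j : Fin mA) : compIdx P M :=
  if h : j ∈ P then Sum.inl (Sum.inr ⟨j, h⟩) else Sum.inl (Sum.inl ⟨j, h⟩)

theorem ofA_mem_iff (Q : Finset (compIdx P M)) (j : Fin mA) :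
    ofA j ∈ Q ↔ (∃ h : j ∉ P, Sum.inl (Sum.inl ⟨j, h⟩) ∈ Q) ∨
      (∃ h : j ∈ P, Sum.inl (Sum.inr ⟨j, h⟩) ∈ Q) := by
  unfold ofA
  split_ifs with h <;> simp [h]

end compIdx

theorem compMat_inl_ofA {rA mA rB mB : ℕ} (A : Matrix (Fin rA) (Fin mA) ℤ)
    (B : Matrix (Fin rB) (Fin mB) ℤ) (P : Finset (Fin mA)) (M : Fin mA → Fin mB)
    (i : Fin rA) (j : Fin mA) :
    compMat A B P M (Sum.inl i) (compIdx.ofA j) = A i j := by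
  unfold compIdx.ofA
  split_ifs <;> rfl

theorem compMat_rank_lower_bound_general {rA mA rB mB : ℕ}
    (A : Matrix (Fin rA) (Fin mA) ℤ) (B : Matrix (Fin rB) (Fin mB) ℤ)
    (P : Finset (Fin mA)) (M : Fin mA → Fin mB)
    (Q : Finset (compIdx P M)) :
    (rkZ (colSub A (Finset.univ.filter fun j : Fin mA =>
          (∃ h : j ∉ P, Sum.inl (Sum.inl ⟨j, h⟩) ∈ Q) ∨
          (∃ h : j ∈ P, Sum.inl (Sum.inr ⟨j, h⟩) ∈ Q))ᶜ) +
        rkZ (colSub (B.submatrix id (Subtype.val : {j : Fin mB // j ∉ P.image M} → Fin mB))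
          (Finset.univ.filter fun j : {j : Fin mB // j ∉ P.image M} => Sum.inr j ∈ Q)ᶜ) ≤
      rkZ (colSub (compMat A B P M) Qᶜ)) ∧
    rkZ A + rkZ (B.submatrix id (Subtype.val : {j : Fin mB // j ∉ P.image M} → Fin mB)) ≤
      rkZ (compMat A B P M) := by
  constructor
  · set S := Finset.univ.filter fun j : Fin mA =>
      (∃ h : j ∉ P, Sum.inl (Sum.inl ⟨j, h⟩) ∈ Q) ∨ (∃ h : j ∈ P, Sum.inl (Sum.inr ⟨j, h⟩) ∈ Q)
    set T := Finset.univ.filter fun j : {j : Fin mB // j ∉ P.image M} => Sum.inr j ∈ Q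
    have hS (j : ↥Sᶜ) : compIdx.ofA (j : Fin mA) ∈ Qᶜ := by
      simpa [S, compIdx.ofA_mem_iff] using j.2
    have hT (j : ↥Tᶜ) : (Sum.inr (j : {j : Fin mB // j ∉ P.image M}) : compIdx P M) ∈ Qᶜ := by
      simpa [T] using j.2
    convert rkZ_submatrix_inl_add_rkZ_submatrix_inr_le (colSub (compMat A B P M) Qᶜ)
      (fun j => ⟨_, hS j⟩) (fun j => ⟨_, hT j⟩) rfl using 3
    · ext i j
      exact (compMat_inl_ofA A B P M i j).symm
    · rfl
  · convert rkZ_submatrix_inl_add_rkZ_submatrix_inr_le (compMat A B P M) compIdx.ofA Sum.inr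
      rfl using 3
    · ext i j
      exact (compMat_inl_ofA A B P M i j).symm
    · rfl

/-- **Lemma (rank lower bound for compounded matrices).** -/
theorem compMat_rank_lower_bound {rA mA rB mB : ℕ}
    (hA : 0 < rA) (hA' : rA < mA) (hB : 0 < rB) (hB' : rB < mB)
    (A : Matrix (Fin rA) (Fin mA) ℤ) (B : Matrix (Fin rB) (Fin mB) ℤ)
    (P : Finset (Fin mA)) (M : Fin mA → Fin mB) (hM : Set.InjOn M (P : Set (Fin mA)))
    (Q : Finset (compIdx P M)) :
    (rkZ (colSub A (Finset.univ.filter fun j : Fin mA =>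
          (∃ h : j ∉ P, Sum.inl (Sum.inl ⟨j, h⟩) ∈ Q) ∨
          (∃ h : j ∈ P, Sum.inl (Sum.inr ⟨j, h⟩) ∈ Q))ᶜ) +
        rkZ (colSub (B.submatrix id (Subtype.val : {j : Fin mB // j ∉ P.image M} → Fin mB))
          (Finset.univ.filter fun j : {j : Fin mB // j ∉ P.image M} => Sum.inr j ∈ Q)ᶜ) ≤
      rkZ (colSub (compMat A B P M) Qᶜ)) ∧
    rkZ A + rkZ (B.submatrix id (Subtype.val : {j : Fin mB // j ∉ P.image M} → Fin mB)) ≤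
      rkZ (compMat A B P M) :=
  compMat_rank_lower_bound_general A B P M Q
end

section
/- Let m > r be positive integers, A ∈ ℤ^{r×m}, and Q ⊆ [m]. Then the compounded matrix A ×_{id_Q} A satisfies rk(A ×_{id_Q} A) = rk(A) + rk(A^{Q̄}). -/
open Matrix Finset MeasureTheory ProbabilityTheory Filter Topology
open scoped BoundedContinuousFunction NNReal ENNReal

attribute [local instance] Classical.propDecidable

/-!
Over `ℚ`, subtracting the first block row of `A ×_{id_Q} A` from the second gives
`(A^{Q̄} | A^Q | 0 ; -A^{Q̄} | 0 | A^{Q̄})`, and adding the last block of columns to the first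
then clears the lower left block. What remains is block diagonal with blocks `A` (up to a
permutation of its columns) and `A^{Q̄}`, so the ranks add.
-/

open Module

theorem Submodule.finrank_prod {K V W : Type*} [Field K] [AddCommGroup V] [Module K V]
    [AddCommGroup W] [Module K W] [FiniteDimensional K V] [FiniteDimensional K W]
    (p : Submodule K V) (q : Submodule K W) :
    finrank K (p.prod q) = finrank K p + finrank K q := by
  have h := LinearMap.finrank_range_of_inj
    (f := p.subtype.prodMap q.subtype) (p.injective_subtype.prodMap q.injective_subtype)
  rwa [LinearMap.range_prodMap, p.range_subtype, q.range_subtype, Module.finrank_prod] at h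

namespace Matrix

variable {K : Type*} [Field K] {m₁ m₂ n₁ n₂ n₃ : Type*}
  [Fintype m₁] [Fintype m₂] [Fintype n₁] [Fintype n₂] [Fintype n₃]

theorem rank_fromBlocks_zero₁₂_zero₂₁ (B : Matrix m₁ n₁ K) (D : Matrix m₂ n₂ K) :
    (fromBlocks B 0 0 D).rank = B.rank + D.rank := by
  have h : (fromBlocks B 0 0 D).mulVecLin =
      (LinearEquiv.sumArrowLequivProdArrow m₁ m₂ K K).symm.toLinearMap ∘ₗ
        B.mulVecLin.prodMap D.mulVecLin ∘ₗ
          (LinearEquiv.sumArrowLequivProdArrow n₁ n₂ K K).toLinearMap := by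
    refine LinearMap.ext fun x => ?_
    rw [← Sum.elim_comp_inl_inr x]
    ext (i | i) <;> simp [fromBlocks_mulVec] <;> rfl
  rw [rank, h, LinearMap.range_comp, LinearMap.range_comp_of_range_eq_top _ (LinearEquiv.range _),
    LinearEquiv.finrank_map_eq, LinearMap.range_prodMap, Submodule.finrank_prod, rank, rank]

theorem rank_fromBlocks_zero₁₂_of_sub_eq_mul [DecidableEq m₁] [DecidableEq n₁] [DecidableEq n₂]
    {X Y : Matrix m₁ n₁ K} {D : Matrix m₁ n₂ K} {S : Matrix n₂ n₁ K} (hS : Y - X = D * S) :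
    (fromBlocks X 0 Y D).rank = X.rank + D.rank := by
  let R : Matrix (m₁ ⊕ m₁) (m₁ ⊕ m₁) K := fromBlocks 1 0 (-1) 1
  let C : Matrix (n₁ ⊕ n₂) (n₁ ⊕ n₂) K := fromBlocks 1 0 (-S) 1
  have hrow : IsUnit R.det := by simp [R]
  have hcol : IsUnit C.det := by simp [C]
  have hdiag : R * fromBlocks X 0 Y D * C = fromBlocks X 0 0 D := by
    simp [R, C, fromBlocks_multiply, ← hS, sub_eq_neg_add]
  rw [← rank_mul_eq_right_of_isUnit_det _ _ hrow, ← rank_mul_eq_left_of_isUnit_det _ _ hcol,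
    hdiag, rank_fromBlocks_zero₁₂_zero₂₁]

theorem rank_fromBlocks_fromCols_submatrix [DecidableEq m₁] [DecidableEq n₁] [DecidableEq n₂]
    [DecidableEq n₃] (U : Matrix m₁ n₁ K) (V : Matrix m₁ n₂ K) (e : n₃ ≃ n₁) :
    (fromBlocks (fromCols U V) 0 (fromCols 0 V) (U.submatrix id e)).rank
      = (fromCols U V).rank + U.rank := by
  -- without the ascription, `*` is elaborated through the `CStarMatrix` instance
  have hS : fromCols 0 V - fromCols U V =
      U.submatrix id e * (-fromCols e.toPEquiv.toMatrix 0 : Matrix n₃ (n₁ ⊕ n₂) K) := by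
    rw [Matrix.mul_neg, mul_fromCols, PEquiv.mul_toMatrix_toPEquiv]
    ext i (j | j) <;> simp
  rw [rank_fromBlocks_zero₁₂_of_sub_eq_mul hS]
  exact congrArg _ (U.rank_submatrix (Equiv.refl m₁) e)

end Matrix

theorem compMat_eq_fromBlocks {rA mA rB mB : ℕ}
    (A : Matrix (Fin rA) (Fin mA) ℤ) (B : Matrix (Fin rB) (Fin mB) ℤ)
    (P : Finset (Fin mA)) (M : Fin mA → Fin mB) :
    compMat A B P M =
      fromBlocks (fromCols (A.submatrix id Subtype.val) (A.submatrix id Subtype.val)) 0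
        (fromCols 0 (B.submatrix id (M ∘ Subtype.val))) (B.submatrix id Subtype.val) := by
  ext (i | i) ((j | j) | j) <;> rfl

theorem compMat_id_rank_general {r m : ℕ}
    (A : Matrix (Fin r) (Fin m) ℤ) (Q : Finset (Fin m)) :
    rkZ (compMat A A Q (id : Fin m → Fin m)) = rkZ A + rkZ (colSub A Qᶜ) := by
  let A' := A.map (Int.cast : ℤ → ℚ)
  let U : Matrix (Fin r) {j // j ∉ Q} ℚ := A'.submatrix id Subtype.val
  let V : Matrix (Fin r) {j // j ∈ Q} ℚ := A'.submatrix id Subtype.val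
  let e₁ : {j // j ∉ Q.image id} ≃ {j // j ∉ Q} := Equiv.subtypeEquivRight (by simp)
  let e₂ : {j // j ∉ Q} ⊕ {j // j ∈ Q} ≃ Fin m :=
    (Equiv.sumComm _ _).trans (Equiv.sumCompl (· ∈ Q))
  let e₃ : {j // j ∈ Qᶜ} ≃ {j // j ∉ Q} := Equiv.subtypeEquivRight (by simp)
  have hcols : fromCols U V = A'.submatrix id e₂ := by
    ext i (j | j) <;> rfl
  calc rkZ (compMat A A Q id)
      = (fromBlocks (fromCols U V) 0 (fromCols 0 V) (U.submatrix id e₁)).rank := by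
        rw [rkZ, compMat_eq_fromBlocks, fromBlocks_map, fromCols_map, fromCols_map]
        simp only [Matrix.map_zero _ Int.cast_zero]
        rfl
    _ = (fromCols U V).rank + U.rank := rank_fromBlocks_fromCols_submatrix U V e₁
    _ = rkZ A + rkZ (colSub A Qᶜ) := by
        rw [hcols]
        exact congrArg₂ _ (A'.rank_submatrix (Equiv.refl _) e₂)
          (U.rank_submatrix (Equiv.refl _) e₃).symm

/-- **Lemma (rank of `A ×_{id_Q} A`).** -/
theorem compMat_id_rank {r m : ℕ} (hr : 0 < r) (hrm : r < m)
    (A : Matrix (Fin r) (Fin m) ℤ) (Q : Finset (Fin m)) :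
    rkZ (compMat A A Q (id : Fin m → Fin m)) = rkZ A + rkZ (colSub A Qᶜ) :=
  compMat_id_rank_general A Q
end

section
/- Let m > r be positive integers, A ∈ ℤ^{r×m} a positive matrix, and Q ⊆ [m]. If there exists an integer vector y ∈ S(A^{Q̄}, 0) with all coordinates nonzero, then the compounded matrix A ×_{id_Q} A is positive. -/
open Matrix Finset MeasureTheory ProbabilityTheory Filter Topology
open scoped BoundedContinuousFunction NNReal ENNReal

attribute [local instance] Classical.propDecidable

/-! Every solution `x` of `A x = 0` lifts to a solution of `A ×_{id_Q} A` by copying it into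
both blocks. Hence positivity of `A` yields a positive solution, and separates any two columns
lying over distinct columns of `A`. The only other pairs of columns are the two copies of a
column `j ∉ Q`; these are separated by the solution carrying `y` in the first block and `0` in
the second. -/

section CompoundedMatrix

variable {rA mA rB mB : ℕ} {P : Finset (Fin mA)} {M : Fin mA → Fin mB}

def compVec (x : Fin mA → ℤ) (x' : Fin mB → ℤ) : compIdx P M → ℤ :=
  Sum.elim (Sum.elim (fun j => x j) (fun j => x j)) (fun j => x' j)

theorem compMat_mulVec_compVec (A : Matrix (Fin rA) (Fin mA) ℤ)
    (B : Matrix (Fin rB) (Fin mB) ℤ) (hM : Set.InjOn M P) {x : Fin mA → ℤ}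
    {x' : Fin mB → ℤ} (hxx' : ∀ p ∈ P, x p = x' (M p)) :
    compMat A B P M *ᵥ compVec x x' = Sum.elim (A *ᵥ x) (B *ᵥ x') := by
  ext (i | i)
  · simp only [mulVec, dotProduct, Fintype.sum_sum_type, compMat, compVec, Sum.elim_inl,
      Sum.elim_inr, zero_mul, Finset.sum_const_zero, add_zero]
    rw [add_comm]
    convert Fintype.sum_subtype_add_sum_subtype (· ∈ P) (fun j => A i j * x j)
  · have hmerged : ∑ j : {j // j ∈ P}, B i (M j) * x j
        = ∑ j : {j // j ∈ P.image M}, B i j * x' j := by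
      rw [Finset.sum_coe_sort P (fun j => B i (M j) * x j),
        Finset.sum_coe_sort (P.image M) (fun j => B i j * x' j), Finset.sum_image hM]
      exact Finset.sum_congr rfl fun p hp => by rw [hxx' p hp]
    simp only [mulVec, dotProduct, Fintype.sum_sum_type, compMat, compVec, Sum.elim_inr,
      Sum.elim_inl, zero_mul, Finset.sum_const_zero, zero_add, hmerged]
    convert Fintype.sum_subtype_add_sum_subtype (· ∈ P.image M) (fun j => B i j * x' j)

end CompoundedMatrix

theorem extend_subtype_val_apply_of_not {β : Type*} {p : β → Prop} (y : Subtype p → ℤ) {b : β}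
    (hb : ¬p b) : Function.extend Subtype.val y 0 b = 0 :=
  Function.extend_apply' _ _ _ fun ⟨a, ha⟩ => hb (ha ▸ a.2)

theorem mulVec_extend_subtype_val {α β : Type*} [Fintype β] (A : Matrix α β ℤ) (S : Finset β)
    (y : S → ℤ) : A *ᵥ Function.extend Subtype.val y 0 = colSub A S *ᵥ y := by
  ext i
  rw [mulVec, dotProduct, ← Finset.sum_subset (Finset.subset_univ S) fun j _ hj => by
    rw [extend_subtype_val_apply_of_not y hj, mul_zero], ← Finset.sum_coe_sort S]
  simp only [Subtype.val_injective.extend_apply, colSub, mulVec, dotProduct, submatrix_apply, id]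

section IdCompound

variable {r m : ℕ} {Q : Finset (Fin m)}

def compCol : compIdx Q (id : Fin m → Fin m) → Fin m :=
  Sum.elim (Sum.elim Subtype.val Subtype.val) Subtype.val

def IsFirstBlock (c : compIdx Q (id : Fin m → Fin m)) : Prop :=
  ∃ j, c = Sum.inl (Sum.inl j)

theorem compVec_self_apply (x : Fin m → ℤ) (c : compIdx Q id) :
    compVec x x c = x (compCol c) := by
  rcases c with (j | j) | j <;> rfl

theorem compMat_id_mulVec_compVec_self (A : Matrix (Fin r) (Fin m) ℤ) {x : Fin m → ℤ}
    (hx : A *ᵥ x = 0) : compMat A A Q id *ᵥ compVec x x = 0 := by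
  rw [compMat_mulVec_compVec A A (Set.injOn_id _) fun _ _ => rfl, hx, Sum.elim_zero_zero]

theorem eq_of_compCol_eq {c₁ c₂ : compIdx Q id} (hcol : compCol c₁ = compCol c₂)
    (hblock : IsFirstBlock c₁ ↔ IsFirstBlock c₂) : c₁ = c₂ := by
  rcases c₁ with (⟨j₁, h₁⟩ | ⟨j₁, h₁⟩) | ⟨j₁, h₁⟩ <;>
    rcases c₂ with (⟨j₂, h₂⟩ | ⟨j₂, h₂⟩) | ⟨j₂, h₂⟩ <;>
    -- a second pass: the membership proofs sit in the goal until it has become `False`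
    simp_all [compCol, IsFirstBlock] <;> simp_all

theorem compVec_extend_ne_zero_iff {y : ↥(Qᶜ) → ℤ} (hy : ∀ j, y j ≠ 0)
    (c : compIdx Q id) : compVec (Function.extend Subtype.val y 0) 0 c ≠ 0 ↔ IsFirstBlock c := by
  rcases c with (⟨j, hj⟩ | ⟨j, hj⟩) | j
  · have hyj : Function.extend Subtype.val y 0 j = y ⟨j, Finset.mem_compl.2 hj⟩ :=
      Subtype.val_injective.extend_apply y 0 ⟨j, _⟩
    simpa [compVec, IsFirstBlock, hyj] using hy _
  all_goals simp [compVec, IsFirstBlock]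

end IdCompound

theorem compMat_id_positive_general {r m : ℕ}
    (A : Matrix (Fin r) (Fin m) ℤ) (hApos : IsPositiveMat A) (Q : Finset (Fin m))
    (hy : ∃ y : ↥(Qᶜ) → ℤ, (colSub A Qᶜ).mulVec y = 0 ∧ ∀ j, y j ≠ 0) :
    IsPositiveMat (compMat A A Q (id : Fin m → Fin m)) := by
  obtain ⟨⟨x₀, hx₀, hx₀_pos⟩, hsep⟩ := hApos
  obtain ⟨y, hy, hy_ne⟩ := hy
  refine ⟨⟨compVec x₀ x₀, compMat_id_mulVec_compVec_self A hx₀, fun c => ?_⟩, fun c₁ c₂ hne => ?_⟩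
  · rw [compVec_self_apply]
    exact hx₀_pos _
  by_cases hcol : compCol c₁ = compCol c₂
  · refine ⟨compVec (Function.extend Subtype.val y 0) 0, ?_, fun heq => hne ?_⟩
    · rw [compMat_mulVec_compVec A A (Set.injOn_id _) fun p hp =>
          extend_subtype_val_apply_of_not y (Finset.notMem_compl.2 hp),
        mulVec_extend_subtype_val, hy, mulVec_zero, Sum.elim_zero_zero]
    · refine eq_of_compCol_eq hcol ?_
      rw [← compVec_extend_ne_zero_iff hy_ne, ← compVec_extend_ne_zero_iff hy_ne, heq]
  · obtain ⟨x, hx, hx_ne⟩ := hsep _ _ hcol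
    refine ⟨compVec x x, compMat_id_mulVec_compVec_self A hx, ?_⟩
    rwa [compVec_self_apply, compVec_self_apply]

/-- **Lemma (positivity of `A ×_{id_Q} A`).** -/
theorem compMat_id_positive {r m : ℕ} (hr : 0 < r) (hrm : r < m)
    (A : Matrix (Fin r) (Fin m) ℤ) (hApos : IsPositiveMat A) (Q : Finset (Fin m))
    (hy : ∃ y : ↥(Qᶜ) → ℤ, (colSub A Qᶜ).mulVec y = 0 ∧ ∀ j, y j ≠ 0) :
    IsPositiveMat (compMat A A Q (id : Fin m → Fin m)) :=
  compMat_id_positive_general A hApos Q hy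
end

section
/- Let m > r be positive integers, A ∈ ℤ^{r×m} positive and abundant, i ∈ [m] and Q = {i}. For every positive integer t, the iterated compounded matrix A ×_{id_Q} A ×_{M_1} ⋯ ×_{M_t} A (where each M_j glues the column of the (j+2)-nd copy of A corresponding to column i to the shared column; equivalently, the matrix with t+1 diagonal blocks A^{Q̄}, the column A^Q appended to each of the first t+1 block rows in a common shared column, and a final block row (A^Q | A^{Q̄})) is positive, and its rank equals rk(A) + (t+1)·rk(A^{Q̄}). -/
open Matrix Finset MeasureTheory ProbabilityTheory Filter Topology
open scoped BoundedContinuousFunction NNReal ENNReal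

attribute [local instance] Classical.propDecidable

/-- The iterated compounded ("milky way") matrix: `t+2` copies of `A` all glued along
column `i`. Block row `s` carries its own copy `A^{[m]∖{i}}` of the non-shared columns,
and the shared column carries the column `i` of `A` in every block row. -/
noncomputable def milkyMat {r m : ℕ} (A : Matrix (Fin r) (Fin m) ℤ) (i : Fin m) (t : ℕ) :
    Matrix (Fin (t + 2) × Fin r) ((Fin (t + 2) × {j : Fin m // j ≠ i}) ⊕ Unit) ℤ :=
  fun p c =>
    match c with
    | Sum.inl (s', j) => if p.1 = s' then A p.2 j.1 else 0
    | Sum.inr _ => A p.2 i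

/-!
Over `ℚ` the compounded matrix is `(1 ⊗ B | a … a)` with `B = A^{Q̄}` and `a = A^Q`. By
abundance `a` lies in the column space of `B`, so the shared column adds no rank and the rank is
`(t + 2) · rk B = rk A + (t + 1) · rk B`.

A kernel vector of `A`, copied into every block, is a kernel vector of the compounded matrix; such
vectors separate any two columns that are copies of different columns of `A`. Two copies of the
same column `j ≠ i` in different blocks are separated by a kernel vector of `A` that vanishes at `i`
but not at `j`, placed in one block only. It exists because, by abundance, column `j` lies in the
span of the columns other than `i` and `j`.
-/

theorem LinearMap.finrank_range_compLeft {K V W : Type*} [Field K] [AddCommGroup V] [Module K V]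
    [AddCommGroup W] [Module K W] [FiniteDimensional K W] (f : V →ₗ[K] W) (ι : Type*)
    [Fintype ι] :
    Module.finrank K (LinearMap.range (f.compLeft ι)) =
      Fintype.card ι * Module.finrank K (LinearMap.range f) := by
  have hfactor :
      f.compLeft ι = (LinearMap.range f).subtype.compLeft ι ∘ₗ f.rangeRestrict.compLeft ι :=
    rfl
  have hsurj : LinearMap.range (f.rangeRestrict.compLeft ι) = ⊤ := by
    rw [range_compLeft, range_rangeRestrict, Submodule.pi_top]
  rw [hfactor, range_comp_of_range_eq_top _ hsurj,
    finrank_range_of_inj Subtype.val_injective.comp_left, Module.finrank_pi_fintype,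
    Finset.sum_const, Finset.card_univ, smul_eq_mul]

namespace Matrix

open scoped Kronecker

variable {K : Type*} [Field K] {m n o : Type*} [Fintype n]

theorem range_mulVecLin_submatrix_eq [Fintype m] {n' : Type*} [Fintype n'] {A : Matrix m n K}
    {f : n' → n} (h : (A.submatrix id f).rank = A.rank) :
    LinearMap.range (A.submatrix id f).mulVecLin = LinearMap.range A.mulVecLin := by
  rw [range_mulVecLin, range_mulVecLin]
  refine Submodule.eq_of_le_of_finrank_eq
    (Submodule.span_mono (Set.range_comp_subset_range f Aᵀ)) ?_
  rwa [← range_mulVecLin, ← range_mulVecLin, ← rank, ← rank]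

theorem exists_submatrix_mulVec_eq [Fintype m] {n' : Type*} [Fintype n'] {A : Matrix m n K}
    {f : n' → n} (h : (A.submatrix id f).rank = A.rank) (v : n → K) :
    ∃ c : n' → K, A.submatrix id f *ᵥ c = A *ᵥ v :=
  (range_mulVecLin_submatrix_eq h).ge (LinearMap.mem_range_self A.mulVecLin v)

theorem submatrix_val_mulVec {R : Type*} [NonUnitalNonAssocSemiring R] (A : Matrix m n R)
    (s : Finset n) (c : s → R) :
    A.submatrix id Subtype.val *ᵥ c = A *ᵥ fun k => if h : k ∈ s then c ⟨k, h⟩ else 0 := by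
  ext p
  simp only [mulVec, dotProduct, submatrix_apply, id, mul_dite, mul_zero]
  rw [← Finset.sum_subset s.subset_univ (fun k _ hk => dif_neg hk), ← Finset.sum_attach s]
  exact Finset.sum_congr rfl fun k _ => by rw [dif_pos k.2]

theorem exists_int_mulVec_eq_zero (A : Matrix m n ℤ) {v : n → ℚ}
    (hv : A.map (Int.cast : ℤ → ℚ) *ᵥ v = 0) :
    ∃ u : n → ℤ, A *ᵥ u = 0 ∧ ∀ k, u k = 0 ↔ v k = 0 := by
  obtain ⟨⟨b, hb⟩, hint⟩ :=
    IsLocalization.exist_integer_multiples_of_finite (nonZeroDivisors ℤ) v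
  choose u hu using hint
  have hb0 : (b : ℚ) ≠ 0 := by exact_mod_cast nonZeroDivisors.ne_zero hb
  have hcast : (Int.cast ∘ u : n → ℚ) = (b : ℚ) • v := funext fun k => by
    simpa [Algebra.smul_def] using hu k
  refine ⟨u, funext fun p => ?_, fun k => ?_⟩
  · have := congrFun (congrArg ((A.map (Int.cast : ℤ → ℚ)) *ᵥ ·) hcast) p
    rw [mulVec_smul, hv, smul_zero] at this
    exact_mod_cast (by simpa [mulVec, dotProduct] using this : ((A *ᵥ u) p : ℚ) = 0)
  · have := congrFun hcast k
    simp only [Function.comp_apply, Pi.smul_apply, smul_eq_mul] at this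
    rw [← Int.cast_eq_zero (α := ℚ), this, mul_eq_zero]
    simp [hb0]

theorem one_kronecker_mulVecLin [Fintype o] [DecidableEq o] (B : Matrix m n K) :
    ((1 : Matrix o o K) ⊗ₖ B).mulVecLin =
      (LinearEquiv.curry K K o m).symm.toLinearMap ∘ₗ B.mulVecLin.compLeft o ∘ₗ
        (LinearEquiv.curry K K o n).toLinearMap := by
  refine LinearMap.ext fun v => funext fun ⟨a, p⟩ => ?_
  simp [mulVec, dotProduct, Fintype.sum_prod_type, one_apply, ite_mul]

theorem rank_one_kronecker [Fintype m] [Fintype o] [DecidableEq o] (B : Matrix m n K) :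
    ((1 : Matrix o o K) ⊗ₖ B).rank = Fintype.card o * B.rank := by
  rw [rank, one_kronecker_mulVecLin, LinearMap.range_comp,
    LinearMap.range_comp_of_range_eq_top _ (LinearEquiv.range _), LinearEquiv.finrank_map_eq,
    LinearMap.finrank_range_compLeft, rank]

theorem rank_fromCols_of_mul_eq {R : Type*} [CommRing R] [StrongRankCondition R] {p : Type*}
    [Fintype p] (D : Matrix m n R) {C : Matrix m p R} {X : Matrix n p R} (hX : D * X = C) :
    (fromCols D C).rank = D.rank := by
  refine le_antisymm ?_ (rank_submatrix_le (fromCols D C) id Sum.inl)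
  have hfactor : fromCols D C = D * fromCols 1 X := by rw [mul_fromCols, Matrix.mul_one, hX]
  exact hfactor ▸ rank_mul_le_left _ _

end Matrix

namespace IsAbundantMat

variable {α β : Type*} [Fintype α] [Fintype β] {A : Matrix α β ℤ}

theorem rkZ_colSub {Q : Finset β} (hA : IsAbundantMat A) (hQ : #Qᶜ ≤ 2) :
    rkZ (colSub A Q) = rkZ A :=
  hA.2 Q (by have := Q.card_add_card_compl; omega)

theorem exists_mulVec_eq_zero (hA : IsAbundantMat A) {i j : β} (hij : j ≠ i) :
    ∃ u : β → ℤ, A *ᵥ u = 0 ∧ u i = 0 ∧ u j ≠ 0 := by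
  set Q : Finset β := {i, j}ᶜ
  have hQ : rkZ (colSub A Q) = rkZ A :=
    hA.rkZ_colSub (by rw [compl_compl]; exact card_le_two)
  obtain ⟨c, hc⟩ := exists_submatrix_mulVec_eq (A := A.map (Int.cast : ℤ → ℚ))
    (f := (Subtype.val : Q → β)) hQ (Pi.single j 1)
  rw [submatrix_val_mulVec] at hc
  obtain ⟨u, hu, hu0⟩ := A.exists_int_mulVec_eq_zero
    (v := (fun k => if h : k ∈ Q then c ⟨k, h⟩ else 0) - Pi.single j 1)
    (by rw [mulVec_sub, hc, sub_self])
  have hiQ : i ∉ Q := by simp [Q]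
  have hjQ : j ∉ Q := by simp [Q]
  exact ⟨u, hu, (hu0 i).2 (by simp [hiQ, hij.symm]), fun h => by simpa [hjQ] using (hu0 j).1 h⟩

end IsAbundantMat

section milkyMat

variable {r m : ℕ} (A : Matrix (Fin r) (Fin m) ℤ) {i : Fin m} {t : ℕ}

theorem milkyMat_mulVec_sumElim (y : Fin (t + 2) → Fin m → ℤ) {z : ℤ} (hz : ∀ s, y s i = z) :
    milkyMat A i t *ᵥ Sum.elim (fun q => y q.1 q.2) (fun _ => z) =
      fun q => (A *ᵥ y q.1) q.2 := by
  ext ⟨s, p⟩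
  simp only [mulVec, dotProduct, Fintype.sum_sum_type, Fintype.sum_prod_type, milkyMat,
    Sum.elim_inl, Sum.elim_inr, ite_mul, zero_mul, Finset.univ_unique, Finset.sum_singleton,
    ← hz s, Fintype.sum_eq_add_sum_subtype_ne _ i]
  rw [Finset.sum_comm, add_comm]
  simp

theorem milkyMat_mulVec_lift {x : Fin m → ℤ} (hx : A *ᵥ x = 0) :
    milkyMat A i t *ᵥ Sum.elim (fun q => x q.2) (fun _ => x i) = 0 := by
  rw [milkyMat_mulVec_sumElim A (fun _ => x) fun _ => rfl, hx]
  rfl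

theorem milkyMat_mulVec_block {w : Fin m → ℤ} (hw : A *ᵥ w = 0) (hwi : w i = 0)
    (s₀ : Fin (t + 2)) :
    milkyMat A i t *ᵥ Sum.elim (fun q => if q.1 = s₀ then w q.2 else 0) (fun _ => 0) = 0 := by
  rw [milkyMat_mulVec_sumElim A (fun s j => if s = s₀ then w j else 0) fun s => by simp [hwi]]
  ext ⟨s, p⟩
  by_cases hs : s = s₀ <;> simp [hs, hw, ← Pi.zero_def]

theorem isPositiveMat_milkyMat (hApos : IsPositiveMat A) (hAab : IsAbundantMat A) :
    IsPositiveMat (milkyMat A i t) := by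
  obtain ⟨⟨x, hx, hxpos⟩, hsep⟩ := hApos
  refine ⟨⟨_, milkyMat_mulVec_lift A hx, ?_⟩, ?_⟩
  · rintro (q | _) <;> apply hxpos
  rintro (⟨s₁, j₁⟩ | _) (⟨s₂, j₂⟩ | _) hne
  · by_cases hj : j₁ = j₂
    · subst hj
      have hs : s₂ ≠ s₁ := fun h => hne (h ▸ rfl)
      obtain ⟨w, hw, hwi, hwj⟩ := hAab.exists_mulVec_eq_zero j₁.2
      exact ⟨_, milkyMat_mulVec_block A hw hwi s₁, by simpa [hs] using hwj⟩
    · obtain ⟨x, hx, hxj⟩ := hsep j₁ j₂ (Subtype.coe_ne_coe.2 hj)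
      exact ⟨_, milkyMat_mulVec_lift A hx, hxj⟩
  · obtain ⟨x, hx, hxj⟩ := hsep j₁ i j₁.2
    exact ⟨_, milkyMat_mulVec_lift A hx, hxj⟩
  · obtain ⟨x, hx, hxj⟩ := hsep i j₂ (Ne.symm j₂.2)
    exact ⟨_, milkyMat_mulVec_lift A hx, hxj⟩
  · exact absurd rfl hne

open scoped Kronecker in
theorem milkyMat_map_eq_fromCols :
    (milkyMat A i t).map (Int.cast : ℤ → ℚ) =
      fromCols (1 ⊗ₖ (A.map (Int.cast : ℤ → ℚ)).submatrix id Subtype.val)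
        (of fun q (_ : Unit) => (A q.2 i : ℚ)) := by
  ext ⟨s, p⟩ (⟨s', j⟩ | _)
  · by_cases hs : s = s' <;> simp [milkyMat, one_apply, hs]
  · simp [milkyMat]

theorem rkZ_milkyMat (hA : rkZ (colSub A {i}ᶜ) = rkZ A) :
    rkZ (milkyMat A i t) = (t + 2) * rkZ (colSub A {i}ᶜ) := by
  set N := A.map (Int.cast : ℤ → ℚ)
  have hB : (N.submatrix id (Subtype.val : {j // j ≠ i} → Fin m)).rank =
      rkZ (colSub A {i}ᶜ) :=
    rank_submatrix (N.submatrix id (Subtype.val : ({i}ᶜ : Finset (Fin m)) → Fin m)) (Equiv.refl _)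
      (Equiv.subtypeEquivRight fun j => by simp : {j // j ≠ i} ≃ ({i}ᶜ : Finset (Fin m)))
  obtain ⟨c, hc⟩ := exists_submatrix_mulVec_eq (A := N) (f := Subtype.val) (hB.trans hA)
    (Pi.single i 1)
  rw [mulVec_single_one] at hc
  rw [rkZ, milkyMat_map_eq_fromCols, rank_fromCols_of_mul_eq _ (X := of fun q _ => c q.2),
    rank_one_kronecker, Fintype.card_fin, hB]
  ext ⟨s, p⟩ _
  simp [mul_apply, Fintype.sum_prod_type, one_apply, ite_mul]
  exact congrFun hc p

end milkyMat

theorem milkyMat_positive_and_rank_general {r m : ℕ}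
    (A : Matrix (Fin r) (Fin m) ℤ) (hApos : IsPositiveMat A) (hAab : IsAbundantMat A)
    (i : Fin m) (t : ℕ) :
    IsPositiveMat (milkyMat A i t) ∧
      rkZ (milkyMat A i t) = rkZ A + (t + 1) * rkZ (colSub A {i}ᶜ) := by
  have hi : rkZ (colSub A {i}ᶜ) = rkZ A :=
    hAab.rkZ_colSub (by simp only [card_compl, card_singleton, Fintype.card_fin]; omega)
  refine ⟨isPositiveMat_milkyMat A hApos hAab, ?_⟩
  rw [rkZ_milkyMat A hi, hi]
  ring

/-- **Lemma (positivity and rank of the iterated compounded matrix).** -/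
theorem milkyMat_positive_and_rank {r m : ℕ} (hr : 0 < r) (hrm : r < m)
    (A : Matrix (Fin r) (Fin m) ℤ) (hApos : IsPositiveMat A) (hAab : IsAbundantMat A)
    (i : Fin m) (t : ℕ) (ht : 1 ≤ t) :
    IsPositiveMat (milkyMat A i t) ∧
      rkZ (milkyMat A i t) = rkZ A + (t + 1) * rkZ (colSub A {i}ᶜ) :=
  milkyMat_positive_and_rank_general A hApos hAab i t
end

section
/- Let m > r be positive integers and A ∈ ℤ^{r×m}. If A is positive, then for every index i ∈ [m], rk(A^{[m]∖{i}}) = rk(A), and consequently rk(A^{Q̄}) ≥ rk(A) − |Q| + 1 for every nonempty Q ⊆ [m]. If moreover A is abundant, then rk(A^{Q̄}) ≥ rk(A) − |Q| + 2 for every Q ⊆ [m] with |Q| ≥ 2. -/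
open Matrix Finset MeasureTheory ProbabilityTheory Filter Topology
open scoped BoundedContinuousFunction NNReal ENNReal

attribute [local instance] Classical.propDecidable

/-!
A solution `x` of `Ax = 0` with `x i ≠ 0` writes column `i` as a combination of the other
columns, so a positive matrix keeps its rank when any single column is deleted. Each further
deleted column lowers the rank by at most one, which gives the bounds starting from one deleted
column (positive case) or from two (abundant case).
-/

section ColumnRank

open Module Submodule

variable {α β : Type*} [Fintype α]

lemma rkZ_colSub_eq_finrank_span (A : Matrix α β ℤ) (S : Finset β) :
    rkZ (colSub A S) = finrank ℚ (span ℚ ((A.map (Int.cast : ℤ → ℚ)).col '' ↑S)) := by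
  have hcols : Set.range ((colSub A S).map (Int.cast : ℤ → ℚ)).col =
      (A.map (Int.cast : ℤ → ℚ)).col '' ↑S := by
    ext v
    exact ⟨fun ⟨j, hj⟩ => ⟨j, j.2, hj⟩, fun ⟨j, hj, hv⟩ => ⟨⟨j, hj⟩, hv⟩⟩
  rw [rkZ, rank_eq_finrank_span_cols, hcols]

lemma rkZ_eq_finrank_span [Fintype β] (A : Matrix α β ℤ) :
    rkZ A = finrank ℚ (span ℚ (Set.range (A.map (Int.cast : ℤ → ℚ)).col)) :=
  rank_eq_finrank_span_cols _

lemma rkZ_colSub_union_le [Fintype β] [DecidableEq β] (A : Matrix α β ℤ) (S T : Finset β) :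
    rkZ (colSub A (S ∪ T)) ≤ rkZ (colSub A S) + T.card := by
  set c := (A.map (Int.cast : ℤ → ℚ)).col
  have hT : finrank ℚ (span ℚ (c '' ↑T)) ≤ T.card := by
    rw [← coe_image]
    exact (finrank_span_finset_le_card _).trans card_image_le
  rw [rkZ_colSub_eq_finrank_span, rkZ_colSub_eq_finrank_span, coe_union, Set.image_union,
    span_union]
  exact (finrank_add_le_finrank_add_finrank _ _).trans (Nat.add_le_add_left hT _)

lemma rkZ_colSub_compl_add_card_le [Fintype β] [DecidableEq β] (A : Matrix α β ℤ)
    {P Q : Finset β} (hPQ : P ⊆ Q) :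
    rkZ (colSub A Pᶜ) + P.card ≤ rkZ (colSub A Qᶜ) + Q.card := by
  have hPc : Pᶜ = Qᶜ ∪ (Q \ P) := by
    ext j
    by_cases hP : j ∈ P
    · simp [hP, hPQ hP]
    · simp [hP, em']
  have := rkZ_colSub_union_le A Qᶜ (Q \ P)
  rw [← hPc, card_sdiff_of_subset hPQ] at this
  have := card_le_card hPQ
  omega

lemma rkZ_colSub_compl_singleton_of_mulVec_eq_zero [Fintype β] [DecidableEq β]
    (A : Matrix α β ℤ) {x : β → ℤ} (hx : A *ᵥ x = 0) {i : β} (hxi : x i ≠ 0) :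
    rkZ (colSub A {i}ᶜ) = rkZ A := by
  rw [rkZ_colSub_eq_finrank_span, rkZ_eq_finrank_span]
  set c := (A.map (Int.cast : ℤ → ℚ)).col
  set N := span ℚ (c '' ↑({i}ᶜ : Finset β))
  have hcol : ∀ j, j ≠ i → c j ∈ N := fun j hj => subset_span ⟨j, by simp [hj], rfl⟩
  have hsum : ∑ j, (x j : ℚ) • c j = 0 := by
    ext k
    have := congrArg (fun v => (v k : ℚ)) hx
    simpa [c, col, mulVec, dotProduct, Finset.sum_apply, mul_comm] using this
  have hci : c i ∈ N := by
    rw [← add_sum_erase _ _ (mem_univ i), add_eq_zero_iff_eq_neg] at hsum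
    have : (x i : ℚ) • c i ∈ N := hsum ▸ N.neg_mem
      (N.sum_mem fun j hj => N.smul_mem _ (hcol j (ne_of_mem_erase hj)))
    exact (N.smul_mem_iff (by exact_mod_cast hxi)).1 this
  have hspan : N = span ℚ (Set.range c) := by
    refine le_antisymm (span_mono (Set.image_subset_range _ _)) (span_le.2 ?_)
    rintro _ ⟨j, rfl⟩
    by_cases hj : j = i
    · exact hj ▸ hci
    · exact hcol j hj
  rw [hspan]

end ColumnRank

theorem rank_column_removal_general {r m : ℕ}
    (A : Matrix (Fin r) (Fin m) ℤ) (hApos : IsPositiveMat A) :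
    (∀ i : Fin m, rkZ (colSub A ({i} : Finset (Fin m))ᶜ) = rkZ A) ∧
    (∀ Q : Finset (Fin m), Q.Nonempty → rkZ A + 1 ≤ rkZ (colSub A Qᶜ) + Q.card) ∧
    (IsAbundantMat A → ∀ Q : Finset (Fin m), 2 ≤ Q.card →
      rkZ A + 2 ≤ rkZ (colSub A Qᶜ) + Q.card) := by
  obtain ⟨⟨x, hx, hxpos⟩, -⟩ := hApos
  have hsingle : ∀ i : Fin m, rkZ (colSub A ({i} : Finset (Fin m))ᶜ) = rkZ A := fun i =>
    rkZ_colSub_compl_singleton_of_mulVec_eq_zero A hx (hxpos i).ne'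
  refine ⟨hsingle, fun Q ⟨i, hi⟩ => ?_, fun habund Q hQ => ?_⟩
  · have := rkZ_colSub_compl_add_card_le A (singleton_subset_iff.2 hi)
    rwa [hsingle, card_singleton] at this
  · obtain ⟨P, hPQ, hP⟩ := exists_subset_card_eq hQ
    have hPc : rkZ (colSub A Pᶜ) = rkZ A :=
      habund.2 _ (by rw [card_compl, hP])
    have := rkZ_colSub_compl_add_card_le A hPQ
    rwa [hPc, hP] at this

/-- **Lemma (rank after column removal for positive and abundant matrices).** -/
theorem rank_column_removal {r m : ℕ} (hr : 0 < r) (hrm : r < m)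
    (A : Matrix (Fin r) (Fin m) ℤ) (hApos : IsPositiveMat A) :
    (∀ i : Fin m, rkZ (colSub A ({i} : Finset (Fin m))ᶜ) = rkZ A) ∧
    (∀ Q : Finset (Fin m), Q.Nonempty → rkZ A + 1 ≤ rkZ (colSub A Qᶜ) + Q.card) ∧
    (IsAbundantMat A → ∀ Q : Finset (Fin m), 2 ≤ Q.card →
      rkZ A + 2 ≤ rkZ (colSub A Qᶜ) + Q.card) :=
  rank_column_removal_general A hApos
end

section
/- Let n ≥ 1 and let S_1, …, S_k be nonempty subsets of {1,…,n}. Let τ be the minimum cardinality of a set Z ⊆ {1,…,n} intersecting every S_i. Let p ∈ [0,1], q = 1 − p, and let [n]_p be the binomial random subset of {1,…,n}. Then the probability that no S_i is entirely contained in [n]_p satisfies q^τ ≤ P( ∀ i ∈ [k], S_i ⊄ [n]_p ) ≤ (∏_{i=1}^k |S_i|) · q^τ. -/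
open Matrix Finset MeasureTheory ProbabilityTheory Filter Topology
open scoped BoundedContinuousFunction NNReal ENNReal

attribute [local instance] Classical.propDecidable

section HittingEvent

variable {ι κ α : Type*} [Fintype ι] [MeasurableSpace α]
  (μ : Measure α) [IsProbabilityMeasure μ] (s : Set α) (S : κ → Finset ι)

theorem measure_pi_forall_mem_finset (Z : Finset ι) :
    Measure.pi (fun _ : ι => μ) {ω | ∀ i ∈ Z, ω i ∈ s} = μ s ^ Z.card := by
  rw [← Finset.prod_const]
  exact Measure.pi_pi_finset _ _ Z

theorem pow_card_le_measure_pi_hitting [DecidableEq ι] {Z : Finset ι}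
    (hZ : ∀ j, (Z ∩ S j).Nonempty) :
    μ s ^ Z.card ≤ Measure.pi (fun _ : ι => μ) {ω | ∀ j, ∃ a ∈ S j, ω a ∈ s} := by
  rw [← measure_pi_forall_mem_finset]
  refine measure_mono fun ω hω j => ?_
  obtain ⟨a, ha⟩ := hZ j
  obtain ⟨haZ, haS⟩ := Finset.mem_inter.mp ha
  exact ⟨a, haS, hω a haZ⟩

theorem measure_pi_hitting_le [Fintype κ] [DecidableEq ι] {τ : ℕ}
    (hτ : ∀ Z : Finset ι, (∀ j, (Z ∩ S j).Nonempty) → τ ≤ Z.card) :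
    Measure.pi (fun _ : ι => μ) {ω | ∀ j, ∃ a ∈ S j, ω a ∈ s} ≤
      (∏ j, ((S j).card : ℝ≥0∞)) * μ s ^ τ := by
  have hsub : {ω : ι → α | ∀ j, ∃ a ∈ S j, ω a ∈ s} ⊆
      ⋃ f ∈ Fintype.piFinset S, {ω | ∀ a ∈ Finset.univ.image f, ω a ∈ s} := by
    intro ω hω
    choose f hfS hfω using hω
    refine Set.mem_biUnion (Fintype.mem_piFinset.mpr hfS) ?_
    simpa using hfω
  calc Measure.pi (fun _ : ι => μ) {ω | ∀ j, ∃ a ∈ S j, ω a ∈ s}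
      ≤ ∑ f ∈ Fintype.piFinset S, μ s ^ (Finset.univ.image f).card := by
        simp_rw [← measure_pi_forall_mem_finset]
        exact (measure_mono hsub).trans (measure_biUnion_finset_le _ _)
    _ ≤ ∑ _f ∈ Fintype.piFinset S, μ s ^ τ := by
        refine Finset.sum_le_sum fun f hf => pow_le_pow_right_of_le_one' prob_le_one (hτ _ ?_)
        exact fun j => ⟨f j, Finset.mem_inter.mpr
          ⟨Finset.mem_image_of_mem f (Finset.mem_univ j), Fintype.mem_piFinset.mp hf j⟩⟩
    _ = (∏ j, ((S j).card : ℝ≥0∞)) * μ s ^ τ := by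
        rw [Finset.sum_const, nsmul_eq_mul, Fintype.card_piFinset, Nat.cast_prod]

end HittingEvent

instance (p : ℝ≥0) (hp : p ≤ 1) : IsProbabilityMeasure (bern p hp) :=
  PMF.toMeasure.isProbabilityMeasure _

theorem bern_singleton_false (p : ℝ≥0) (hp : p ≤ 1) :
    bern p hp {false} = ((1 - p : ℝ≥0) : ℝ≥0∞) := by
  rw [bern, PMF.toMeasure_apply_singleton _ _ (measurableSet_singleton _)]
  simp [PMF.bernoulli, ENNReal.coe_sub]

theorem cover_number_probability_bounds_general (n k : ℕ)
    (S : Fin k → Finset (Fin n))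
    (τ : ℕ)
    (hτ : IsLeast {t : ℕ | ∃ Z : Finset (Fin n), Z.card = t ∧ ∀ i, (Z ∩ S i).Nonempty} τ)
    (p : ℝ≥0) (hp : p ≤ 1) :
    (((1 - p : ℝ≥0) : ℝ≥0∞)) ^ τ ≤
      prodBern n p hp {ω | ∀ i, ∃ a ∈ S i, ω a = false} ∧
    prodBern n p hp {ω | ∀ i, ∃ a ∈ S i, ω a = false} ≤
      (∏ i : Fin k, ((S i).card : ℝ≥0∞)) * (((1 - p : ℝ≥0) : ℝ≥0∞)) ^ τ := by
  rw [← bern_singleton_false p hp]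
  obtain ⟨⟨Z, rfl, hZ⟩, hmin⟩ := hτ
  exact ⟨pow_card_le_measure_pi_hitting _ _ S hZ,
    measure_pi_hitting_le _ _ S fun Z hZ => hmin ⟨Z, rfl, hZ⟩⟩

/-- **Lemma (probability that no set of a family is fully selected, in terms of the
vertex cover number).** -/
theorem cover_number_probability_bounds (n k : ℕ) (hn : 1 ≤ n)
    (S : Fin k → Finset (Fin n)) (hS : ∀ i, (S i).Nonempty)
    (τ : ℕ)
    (hτ : IsLeast {t : ℕ | ∃ Z : Finset (Fin n), Z.card = t ∧ ∀ i, (Z ∩ S i).Nonempty} τ)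
    (p : ℝ≥0) (hp : p ≤ 1) :
    (((1 - p : ℝ≥0) : ℝ≥0∞)) ^ τ ≤
      prodBern n p hp {ω | ∀ i, ∃ a ∈ S i, ω a = false} ∧
    prodBern n p hp {ω | ∀ i, ∃ a ∈ S i, ω a = false} ≤
      (∏ i : Fin k, ((S i).card : ℝ≥0∞)) * (((1 - p : ℝ≥0) : ℝ≥0∞)) ^ τ :=
  cover_number_probability_bounds_general n k S τ hτ p hp
end
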